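/- arXiv:2307.12593 — 8 statements merged into one kernel-verified Lean document; each statement's English description precedes it below -/
import Mathlib

section
/- Bilotta's construction yields a non-overlapping code: let D be the set of Dyck sequences of length 2n, i.e. binary sequences with n zeros and n ones such that no prefix has more zeros than ones. Then the set C = {1a0 : a ∈ D} ⊆ {0,1}^{2n+2} is a non-overlapping code. -/
def NoPS {α : Type*} (u v : List α) : Prop :=
  ∀ p : List α, p ≠ [] → p ≠ u → p <+: u → ¬ p <:+ v

def NonOverlap {α : Type*} (u v : List α) : Prop := NoPS u v ∧ NoPS v u

/-- Dyck sequences of length `2n`: `n` zeros (`false`) and `n` ones (`true`), and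
no prefix has more zeros than ones. -/
def Dyck (n : ℕ) : Set (List Bool) :=
  {a | a.length = 2 * n ∧ a.count false = n ∧ a.count true = n ∧
    ∀ k, (a.take k).count false ≤ (a.take k).count true}

lemma prefix_lt {n : ℕ} {a p : List Bool} (ha : a ∈ Dyck n)
    (hne : p ≠ []) (hneq : p ≠ true :: (a ++ [false]))
    (hp : p <+: true :: (a ++ [false])) :
    p.count false < p.count true := by
  obtain ⟨_, _, _, ha4⟩ := ha
  obtain ⟨x, q, rfl⟩ : ∃ x q, p = x :: q := by
    cases p with
    | nil => exact absurd rfl hne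
    | cons x q => exact ⟨x, q, rfl⟩
  obtain ⟨hx, hq⟩ : x = true ∧ q <+: a ++ [false] := by
    obtain ⟨t, ht⟩ := hp
    simp only [List.cons_append] at ht
    injection ht with h1 h2
    exact ⟨h1, ⟨t, h2⟩⟩
  subst hx
  have hqa : q <+: a := by
    rcases (List.prefix_or_prefix_of_prefix hq (List.prefix_append a [false])) with h | h
    · exact h
    · have hlen : q.length ≤ (a ++ [false]).length := hq.length_le
      have hlen2 : a.length ≤ q.length := h.length_le
      simp at hlen
      have : q.length = a.length ∨ q.length = a.length + 1 := by omega
      rcases this with hl | hl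
      · rw [h.eq_of_length hl.symm]
      · exact absurd (hq.eq_of_length (by simp [hl])) (by intro hh; apply hneq; rw [hh])
  have hq' : q = a.take q.length := List.prefix_iff_eq_take.mp hqa
  have h4 := ha4 q.length
  rw [← hq'] at h4
  simp [List.count_cons]
  omega

lemma suffix_gt {n : ℕ} {b s : List Bool} (hb : b ∈ Dyck n)
    (hne : s ≠ []) (hlen : s.length < (true :: (b ++ [false])).length)
    (hs : s <:+ true :: (b ++ [false])) :
    s.count true < s.count false := by
  obtain ⟨hb1, hb2, hb3, hb4⟩ := hb
  have hs' : s <:+ b ++ [false] := by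
    obtain ⟨r, hr⟩ := hs
    cases r with
    | nil =>
      simp only [List.nil_append] at hr
      rw [hr] at hlen; omega
    | cons y r => injection hr with _ h2; exact ⟨r, h2⟩
  obtain ⟨t, rfl, ht⟩ : ∃ t, s = t ++ [false] ∧ t <:+ b := by
    obtain ⟨r, hr⟩ := hs'
    have hsd : s = s.dropLast ++ [s.getLast hne] := (List.dropLast_append_getLast hne).symm
    rw [hsd, ← List.append_assoc] at hr
    obtain ⟨h1, h2⟩ := List.append_inj' hr rfl
    simp at h2
    rw [h2] at hsd
    exact ⟨s.dropLast, hsd, ⟨r, h1⟩⟩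
  have htd : t = b.drop (b.length - t.length) := List.suffix_iff_eq_drop.mp ht
  set j := b.length - t.length with hj
  have hcf : (b.take j).count false + (b.drop j).count false = n := by
    rw [← List.count_append, List.take_append_drop, hb2]
  have hct : (b.take j).count true + (b.drop j).count true = n := by
    rw [← List.count_append, List.take_append_drop, hb3]
  have h4 := hb4 j
  rw [htd]
  simp [List.count_append]
  omega

/-- Bilotta's even-length construction `C = {1a0 : a ∈ D}` is a non-overlapping code. -/
theorem stmt3 (n : ℕ) :
    ∀ u ∈ {w : List Bool | ∃ a ∈ Dyck n, w = true :: (a ++ [false])},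
    ∀ v ∈ {w : List Bool | ∃ a ∈ Dyck n, w = true :: (a ++ [false])},
    NonOverlap u v := by
  have key : ∀ u ∈ {w : List Bool | ∃ a ∈ Dyck n, w = true :: (a ++ [false])},
      ∀ v ∈ {w : List Bool | ∃ a ∈ Dyck n, w = true :: (a ++ [false])}, NoPS u v := by
    rintro u ⟨a, ha, rfl⟩ v ⟨b, hb, rfl⟩ p hne hneq hp hsuf
    have h1 := prefix_lt ha hne hneq hp
    have hlen : p.length < (true :: (b ++ [false])).length := by
      have := hp.length_le
      have hab : a.length = b.length := by
        obtain ⟨ha1, _, _, _⟩ := ha; obtain ⟨hb1, _, _, _⟩ := hb; omega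
      rcases lt_or_eq_of_le this with h | h
      · simpa [hab] using h
      · exact absurd (hp.eq_of_length h) hneq
    have h2 := suffix_gt hb hne hlen hsuf
    omega
  rintro u hu v hv
  exact ⟨key u hu v hv, key v hv u hu⟩
end

section
/- The odd-length Bilotta construction yields a non-overlapping code: let D be the set of Dyck sequences of length 2n. Then the set C = {1a : a ∈ D} ⊆ {0,1}^{2n+1} is a non-overlapping code. -/
lemma dyck_prefix_count {n : ℕ} {a t : List Bool} (ha : a ∈ Dyck n) (h : t <+: a) :
    t.count false ≤ t.count true := by
  obtain ⟨s, rfl⟩ := h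
  have := ha.2.2.2 t.length
  simpa [List.take_left] using this

lemma dyck_suffix_count {n : ℕ} {a s : List Bool} (ha : a ∈ Dyck n) (h : s <:+ a) :
    s.count true ≤ s.count false := by
  obtain ⟨q, rfl⟩ := h
  have hq : q.count false ≤ q.count true := dyck_prefix_count ha ⟨s, rfl⟩
  have h1 : q.count false + s.count false = n := by
    have := ha.2.1; simpa [List.count_append] using this
  have h2 : q.count true + s.count true = n := by
    have := ha.2.2.1; simpa [List.count_append] using this
  omega

lemma noPS_aux {n : ℕ} {a b : List Bool} (ha : a ∈ Dyck n) (hb : b ∈ Dyck n) :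
    NoPS (true :: a) (true :: b) := by
  intro p hne hneq hpre hsuf
  obtain ⟨t, rfl, ht⟩ : ∃ t, p = true :: t ∧ t <+: a := by
    cases p with
    | nil => exact absurd rfl hne
    | cons x t =>
      rw [List.cons_prefix_cons] at hpre
      exact ⟨t, by rw [hpre.1], hpre.2⟩
  have htne : t ≠ a := fun h => hneq (by rw [h])
  have hlen : t.length < a.length :=
    lt_of_le_of_ne (List.IsPrefix.length_le ht) (fun h => htne (List.IsPrefix.eq_of_length ht h))
  have hsb : (true :: t) <:+ b := by
    rcases List.suffix_cons_iff.mp hsuf with h | h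
    · have : t.length + 1 = b.length + 1 := by
        simpa using congrArg List.length h
      have hab : a.length = b.length := by rw [ha.1, hb.1]
      omega
    · exact h
  have h1 := dyck_suffix_count hb hsb
  have h2 := dyck_prefix_count ha ht
  simp [List.count_cons] at h1
  omega

/-- Bilotta's odd-length construction `C = {1a : a ∈ D}` is a non-overlapping code. -/
theorem stmt4 (n : ℕ) :
    ∀ u ∈ {w : List Bool | ∃ a ∈ Dyck n, w = true :: a},
    ∀ v ∈ {w : List Bool | ∃ a ∈ Dyck n, w = true :: a},
    NonOverlap u v := by
  rintro u ⟨a, ha, rfl⟩ v ⟨b, hb, rfl⟩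
  exact ⟨noPS_aux ha hb, noPS_aux hb ha⟩
end

section
/- Wang-Wang lifting preserves non-overlapping codes: let S ⊆ {0,1}^n be a binary non-overlapping code and (I,J) a partition of Z_q with q ≥ 2 into nonempty parts. For w = w_1...w_n ∈ S define Φ(w) = {y_1...y_n : y_i ∈ I if w_i = 0 and y_i ∈ J if w_i = 1}. Then Φ(S) = ⋃_{w∈S} Φ(w) is a non-overlapping code over Z_q. -/
/-- Wang-Wang lifting: `Φ(S)` replaces each `0` (`false`) by a letter of `I`
and each `1` (`true`) by a letter of `J`. -/
def WWlift (q : ℕ) (S : Set (List Bool)) (I J : Set (ZMod q)) : Set (List (ZMod q)) :=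
  {y | ∃ w ∈ S, List.Forall₂ (fun b x => if b then x ∈ J else x ∈ I) w y}

theorem stmt5 (n q : ℕ) (hq : 2 ≤ q) (S : Set (List Bool))
    (hlen : ∀ w ∈ S, w.length = n) (hcode : ∀ u ∈ S, ∀ v ∈ S, NonOverlap u v)
    (I J : Set (ZMod q)) (hIJ : I ∪ J = Set.univ) (hdisj : I ∩ J = ∅)
    (hI : I.Nonempty) (hJ : J.Nonempty) :
    ∀ u ∈ WWlift q S I J, ∀ v ∈ WWlift q S I J, NonOverlap u v := by
  classical
  set π : ZMod q → Bool := fun x => decide (x ∈ J) with hπ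
  have key : ∀ w y, List.Forall₂ (fun b x => if b then x ∈ J else x ∈ I) w y →
      y.map π = w := by
    intro w y h
    induction h with
    | nil => simp
    | cons hbx htail ih =>
      rename_i b x _ _
      simp only [List.map_cons, ih, List.cons.injEq, and_true]
      cases b with
      | true => simpa [π] using hbx
      | false =>
        have hbx : x ∈ I := hbx
        have hxJ : x ∉ J := by
          intro hxJ
          have : x ∈ I ∩ J := ⟨hbx, hxJ⟩
          simp [hdisj] at this
        simp [π, hxJ]
  have step : ∀ (u v : List (ZMod q)) (w w' : List Bool), u.map π = w → v.map π = w' →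
      NoPS w w' → NoPS u v := by
    intro u v w w' hu hv h p hne hpu hpre hsuf
    refine h (p.map π) (by simpa using hne) ?_ (hu ▸ hpre.map π) (hv ▸ hsuf.map π)
    intro he
    apply hpu
    apply hpre.eq_of_length
    have := congrArg List.length he
    simpa [← hu] using this
  rintro u ⟨w, hw, hwu⟩ v ⟨w', hw', hwv⟩
  have hu := key _ _ hwu
  have hv := key _ _ hwv
  exact ⟨step u v w w' hu hv (hcode w hw w' hw').1,
         step v u w' w hv hu (hcode w' hw' w hw).1⟩
end

section
/- Blackburn's construction yields a non-overlapping code: let 1 ≤ k ≤ n-1, let (I,J) be a partition of Σ into nonempty parts, and let S ⊆ I^k. Let C be the set of all words c ∈ Σ^n such that c_1...c_k ∈ S, c_{k+1} ∈ J, c_n ∈ J, and no length-k subword of c_{k+2}...c_{n-1} lies in S. Then C is a non-overlapping code. -/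
/-- Blackburn's construction: words `c` of length `n` with `c₁⋯c_k ∈ S`,
`c_{k+1} ∈ J`, `c_n ∈ J`, and no length-`k` subword of `c_{k+2}⋯c_{n-1}` lies in `S`. -/
def BlackC {α : Type*} [Inhabited α] (n k : ℕ) (S : Set (List α)) (J : Set α) :
    Set (List α) :=
  {c | c.length = n ∧ c.take k ∈ S ∧ c.getD k default ∈ J ∧ c.getD (n - 1) default ∈ J ∧
    ∀ u : List α, u.length = k → u <:+: (c.drop (k + 1)).take (n - k - 2) → u ∉ S}

private lemma getD_take_of_lt {α : Type*} [Inhabited α] (l : List α) {i m : ℕ}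
    (h : i < m) (h2 : i < l.length) :
    (l.take m).getD i default = l.getD i default := by
  rw [List.getD_eq_getElem l default h2, List.getD_eq_getElem _ default (by simp [h, h2])]
  simp [List.getElem_take]

private lemma getD_drop {α : Type*} [Inhabited α] (l : List α) {i j : ℕ}
    (h : j + i < l.length) :
    (l.drop j).getD i default = l.getD (j + i) default := by
  rw [List.getD_eq_getElem l default h, List.getD_eq_getElem _ default (by simp; omega)]
  simp [List.getElem_drop]

private lemma blackNoPS {α : Type*} [Inhabited α] (n k : ℕ) (hk1 : 1 ≤ k) (hk2 : k ≤ n - 1)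
    (I J : Set α) (hdisj : I ∩ J = ∅)
    (S : Set (List α)) (hS : ∀ u ∈ S, u.length = k ∧ ∀ x ∈ u, x ∈ I)
    (c₁ c₂ : List α) (h₁ : c₁ ∈ BlackC n k S J) (h₂ : c₂ ∈ BlackC n k S J) :
    NoPS c₁ c₂ := by
  obtain ⟨hlen₁, hS₁, hJ₁, hJn₁, hmid₁⟩ := h₁
  obtain ⟨hlen₂, hS₂, hJ₂, hJn₂, hmid₂⟩ := h₂
  have hkI : ∀ x ∈ c₁.take k, x ∈ I := (hS _ hS₁).2
  have hn : k + 1 ≤ n := by omega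
  intro p hne hpne hpre hsuf
  set m := p.length with hm
  have hm1 : 1 ≤ m := List.length_pos_iff.mpr hne
  have hmle : m ≤ n := hlen₁ ▸ hpre.length_le
  have hmlt : m < n := by
    rcases lt_or_eq_of_le hmle with h | h
    · exact h
    · exact absurd (hpre.eq_of_length (by omega)) hpne
  have hptake : p = c₁.take m := List.prefix_iff_eq_take.mp hpre
  have hpdrop : p = c₂.drop (n - m) := by
    have := List.suffix_iff_eq_drop.mp hsuf
    rwa [hlen₂, ← hm] at this
  have hdis : ∀ x : α, x ∈ I → x ∈ J → False := fun x h1 h2 =>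
    Set.eq_empty_iff_forall_notMem.mp hdisj x ⟨h1, h2⟩
  -- a letter of p equals a letter of c₁ and of c₂
  have hpc₁ : ∀ i, i < m → p.getD i default = c₁.getD i default := by
    intro i hi
    rw [hptake]; exact getD_take_of_lt _ hi (by omega)
  have hpc₂ : ∀ i, i < m → p.getD i default = c₂.getD (n - m + i) default := by
    intro i hi
    rw [hpdrop]; exact getD_drop _ (by omega)
  by_cases hcase : m ≤ k
  · -- short prefix: last letter of p is in I (from c₁'s first block) and in J (last of c₂)
    have h1 : p.getD (m - 1) default = c₁.getD (m - 1) default := hpc₁ _ (by omega)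
    have h2 : p.getD (m - 1) default = c₂.getD (n - 1) default := by
      rw [hpc₂ _ (by omega)]; congr 1; omega
    have hI1 : c₁.getD (m - 1) default ∈ I := by
      apply hkI
      rw [← getD_take_of_lt c₁ (show m - 1 < k by omega) (by omega),
        List.getD_eq_getElem _ default (by simp [hlen₁]; omega)]
      exact List.getElem_mem _
    exact hdis _ hI1 (by rw [← h1, h2]; exact hJn₂)
  · push_neg at hcase
    set j := n - m with hj
    have hj1 : 1 ≤ j := by omega
    have hjle : j ≤ n - k - 1 := by omega
    -- the first k letters of c₁ coincide with c₂ at positions j..j+k-1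
    have hq : ∀ i, i < k → c₁.getD i default = c₂.getD (j + i) default := by
      intro i hi
      rw [← hpc₁ _ (by omega), hpc₂ _ (by omega)]
    by_cases hcase2 : j ≤ k
    · -- position k of c₂ lies in the I-block
      have h1 : c₁.getD (k - j) default = c₂.getD k default := by
        rw [hq _ (by omega)]; congr 1; omega
      have hI1 : c₁.getD (k - j) default ∈ I := by
        apply hkI
        rw [← getD_take_of_lt c₁ (show k - j < k by omega) (by omega),
          List.getD_eq_getElem _ default (by simp [hlen₁]; omega)]
        exact List.getElem_mem _
      exact hdis _ hI1 (by rw [← h1] at hJ₂; exact hJ₂)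
    · -- q := c₁.take k is an infix of the forbidden middle region of c₂
      push_neg at hcase2
      set q := c₁.take k with hqdef
      have hqlen : q.length = k := (hS _ hS₁).1
      have hqp : q = p.take k := by
        rw [hptake, hqdef, List.take_take, min_eq_left (le_of_lt hcase)]
      have hqpre : q <+: c₂.drop j := by
        rw [hqp, hpdrop]; exact List.take_prefix ..
      have hdd : c₂.drop j = ((c₂.drop (k + 1)).drop (j - (k + 1))) := by
        rw [List.drop_drop]; congr 1; omega
      have hRd : ((c₂.drop (k + 1)).take (n - k - 2)).drop (j - (k + 1)) =
          ((c₂.drop (k + 1)).drop (j - (k + 1))).take (n - k - 2 - (j - (k + 1))) :=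
        List.drop_take ..
      have hqpre2 : q <+: ((c₂.drop (k + 1)).take (n - k - 2)).drop (j - (k + 1)) := by
        rw [hRd, ← hdd]
        have : q = (c₂.drop j).take k := by
          have := List.prefix_iff_eq_take.mp hqpre
          rwa [hqlen] at this
        rw [this, show List.take k (List.drop j c₂) =
            (List.take (n - k - 2 - (j - (k + 1))) (List.drop j c₂)).take k by
          rw [List.take_take, min_eq_left (by omega)]]
        exact List.take_prefix ..
      have hinf : q <:+: (c₂.drop (k + 1)).take (n - k - 2) :=
        hqpre2.isInfix.trans (List.drop_suffix ..).isInfix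
      exact hmid₂ q hqlen hinf hS₁

theorem stmt6 {α : Type*} [Inhabited α] (n k : ℕ) (hk1 : 1 ≤ k) (hk2 : k ≤ n - 1)
    (I J : Set α) (hIJ : I ∪ J = Set.univ) (hdisj : I ∩ J = ∅)
    (hI : I.Nonempty) (hJ : J.Nonempty)
    (S : Set (List α)) (hS : ∀ u ∈ S, u.length = k ∧ ∀ x ∈ u, x ∈ I) :
    ∀ c₁ ∈ BlackC n k S J, ∀ c₂ ∈ BlackC n k S J, NonOverlap c₁ c₂ := by
  intro c₁ h₁ c₂ h₂
  exact ⟨blackNoPS n k hk1 hk2 I J hdisj S hS c₁ c₂ h₁ h₂,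
         blackNoPS n k hk1 hk2 I J hdisj S hS c₂ c₁ h₂ h₁⟩
end

section
/- Let n ≥ 3 and let (L_1, R_1) be a partition of Σ into two nonempty parts, and for each 2 ≤ i ≤ n-1, let (L_i, R_i) be a partition of ⋃_{j=1}^{i-1} L_j R_{i-j} (concatenation of sets). Then no proper nonempty prefix of a word in L_i ∪ R_i ∪ C occurs as a proper suffix of a word in L_j ∪ R_j ∪ C, where C = ⋃_{i=1}^{n-1} L_i R_{n-i}. -/
/-- Concatenation of sets of strings: `AB = {ab : a ∈ A, b ∈ B}`. -/
def catSet {α : Type*} (A B : Set (List α)) : Set (List α) :=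
  {w | ∃ a ∈ A, ∃ b ∈ B, w = a ++ b}

/-- The partition system of Construction `M_{q,n}`: `(L 1, R 1)` is a partition of the
one-letter words into two nonempty parts, and for `2 ≤ i ≤ n-1`, `(L i, R i)` is a
partition of `⋃_{j=1}^{i-1} (L j)(R (i-j))`. -/
def PartitionSystem {α : Type*} (n : ℕ) (L R : ℕ → Set (List α)) : Prop :=
  (L 1 ∪ R 1 = {w : List α | w.length = 1}) ∧ (L 1 ∩ R 1 = ∅) ∧
  (L 1).Nonempty ∧ (R 1).Nonempty ∧
  ∀ i, 2 ≤ i → i ≤ n - 1 →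
    (L i ∪ R i = ⋃ j ∈ Finset.Ico 1 i, catSet (L j) (R (i - j))) ∧ (L i ∩ R i = ∅)

namespace Stmt7Aux

variable {α : Type*}

lemma suffix_cancel {a b c : List α} (h : a ++ c <:+ b ++ c) : a <:+ b := by
  obtain ⟨z, hz⟩ := h
  rw [← List.append_assoc] at hz
  exact ⟨z, (List.append_left_injective c).eq_iff.mp hz⟩

/-- The family of all words of the construction: all words in some `L i ∪ R i`
with `1 ≤ i ≤ n-1`, together with the code `C`. -/
def Fam (n : ℕ) (L R : ℕ → Set (List α)) : Set (List α) :=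
  {w | ∃ i, 1 ≤ i ∧ i ≤ n - 1 ∧ w ∈ L i ∪ R i} ∪
  (⋃ i ∈ Finset.Ico 1 n, catSet (L i) (R (n - i)))

lemma memFamL {n : ℕ} {L R : ℕ → Set (List α)} {j : ℕ} {l : List α}
    (h1 : 1 ≤ j) (h2 : j ≤ n - 1) (hl : l ∈ L j) : l ∈ Fam n L R :=
  Or.inl ⟨j, h1, h2, Or.inl hl⟩

lemma memFamR {n : ℕ} {L R : ℕ → Set (List α)} {j : ℕ} {r : List α}
    (h1 : 1 ≤ j) (h2 : j ≤ n - 1) (hr : r ∈ R j) : r ∈ Fam n L R :=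
  Or.inl ⟨j, h1, h2, Or.inr hr⟩

lemma lenW {n : ℕ} {L R : ℕ → Set (List α)} (hp : PartitionSystem n L R) :
    ∀ i, 1 ≤ i → i ≤ n - 1 → ∀ w, w ∈ L i ∪ R i → w.length = i := by
  intro i
  induction i using Nat.strong_induction_on with
  | _ i ih =>
    intro h1 h2 w hw
    rcases Nat.lt_or_ge i 2 with hi | hi
    · have hi1 : i = 1 := by omega
      subst hi1
      rw [hp.1] at hw
      exact hw
    · rw [(hp.2.2.2.2 i hi h2).1] at hw
      simp only [Set.mem_iUnion, Finset.mem_Ico, exists_prop] at hw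
      obtain ⟨j, ⟨hj1, hji⟩, a, ha, b, hb, rfl⟩ := hw
      have hla := ih j hji hj1 (by omega) a (Or.inl ha)
      have hlb := ih (i - j) (by omega) (by omega) (by omega) b (Or.inr hb)
      rw [List.length_append, hla, hlb]
      omega

lemma disj {n : ℕ} {L R : ℕ → Set (List α)} (hp : PartitionSystem n L R) :
    ∀ i, 1 ≤ i → i ≤ n - 1 → ∀ w, w ∈ L i → w ∈ R i → False := by
  intro i h1 h2 w hL hR
  rcases Nat.lt_or_ge i 2 with hi | hi
  · have hi1 : i = 1 := by omega
    subst hi1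
    exact Set.eq_empty_iff_forall_notMem.mp hp.2.1 w ⟨hL, hR⟩
  · exact Set.eq_empty_iff_forall_notMem.mp (hp.2.2.2.2 i hi h2).2 w ⟨hL, hR⟩

lemma factorW {n : ℕ} {L R : ℕ → Set (List α)} (hp : PartitionSystem n L R)
    {a : ℕ} {w : List α} (h2 : 2 ≤ a) (hle : a ≤ n - 1) (hw : w ∈ L a ∪ R a) :
    ∃ b c l r, 1 ≤ b ∧ b ≤ n - 1 ∧ 1 ≤ c ∧ c ≤ n - 1 ∧ b + c = a ∧
      l ∈ L b ∧ r ∈ R c ∧ w = l ++ r ∧ l.length = b ∧ r.length = c := by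
  rw [(hp.2.2.2.2 a h2 hle).1] at hw
  simp only [Set.mem_iUnion, Finset.mem_Ico, exists_prop] at hw
  obtain ⟨b, ⟨hb1, hba⟩, l, hl, r, hr, rfl⟩ := hw
  refine ⟨b, a - b, l, r, hb1, by omega, by omega, by omega, by omega, hl, hr, rfl,
    lenW hp b hb1 (by omega) l (Or.inl hl),
    lenW hp (a - b) (by omega) (by omega) r (Or.inr hr)⟩

lemma factor {n : ℕ} {L R : ℕ → Set (List α)} (hp : PartitionSystem n L R)
    {w : List α} (hw : w ∈ Fam n L R) (h2 : 2 ≤ w.length) :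
    ∃ j k l r, 1 ≤ j ∧ j ≤ n - 1 ∧ 1 ≤ k ∧ k ≤ n - 1 ∧
      l ∈ L j ∧ r ∈ R k ∧ w = l ++ r ∧ l.length = j ∧ r.length = k := by
  rcases hw with ⟨i, h1, hle, hw⟩ | hw
  · have hlen := lenW hp i h1 hle w hw
    have hi2 : 2 ≤ i := by omega
    obtain ⟨b, c, l, r, hb1, hb2, hc1, hc2, _, hl, hr, rfl, hll, hlr⟩ :=
      factorW hp hi2 hle hw
    exact ⟨b, c, l, r, hb1, hb2, hc1, hc2, hl, hr, rfl, hll, hlr⟩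
  · simp only [Set.mem_iUnion, Finset.mem_Ico, exists_prop] at hw
    obtain ⟨i, ⟨h1, hin⟩, l, hl, r, hr, rfl⟩ := hw
    exact ⟨i, n - i, l, r, h1, by omega, by omega, by omega, hl, hr, rfl,
      lenW hp i h1 (by omega) l (Or.inl hl),
      lenW hp (n - i) (by omega) (by omega) r (Or.inr hr)⟩

lemma key {n : ℕ} {L R : ℕ → Set (List α)} (hp : PartitionSystem n L R) :
    ∀ N : ℕ,
      (∀ u v p : List α, u ∈ Fam n L R → v ∈ Fam n L R → u.length + v.length ≤ N →
        p ≠ [] → p <+: u → p <:+ v → p = u ∨ p = v) ∧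
      (∀ a : ℕ, ∀ w v : List α, 1 ≤ a → a ≤ n - 1 → w ∈ L a → v ∈ Fam n L R →
        w.length + v.length ≤ N → w <:+ v → w = v) ∧
      (∀ a : ℕ, ∀ w u : List α, 1 ≤ a → a ≤ n - 1 → w ∈ R a → u ∈ Fam n L R →
        w.length + u.length ≤ N → w <+: u → w = u) := by
  intro N
  induction N using Nat.strong_induction_on with
  | _ N ih =>
  refine ⟨?_, ?_, ?_⟩
  -- Main statement P
  · intro u v p huF hvF hN hpne hpre hsuf
    by_cases hpu : p = u
    · exact Or.inl hpu
    by_cases hpv : p = v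
    · exact Or.inr hpv
    exfalso
    have hplen : 0 < p.length := List.length_pos_iff.mpr hpne
    have hpu' : p.length < u.length :=
      lt_of_le_of_ne hpre.length_le (fun h => hpu (hpre.eq_of_length h))
    have hpv' : p.length < v.length :=
      lt_of_le_of_ne hsuf.length_le (fun h => hpv (hsuf.eq_of_length h))
    obtain ⟨j, k, l, r, hj1, hj2, hk1, hk2, hl, hr, rfl, hll, hlr⟩ :=
      factor hp huF (by omega)
    obtain ⟨j', k', l', r', hj'1, hj'2, hk'1, hk'2, hl', hr', rfl, hll', hlr'⟩ :=
      factor hp hvF (by omega)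
    simp only [List.length_append] at hpu' hpv' hN
    rcases Nat.lt_or_ge j p.length with hj | hj
    · -- p crosses the boundary of u = l ++ r
      have hlp : l <+: p :=
        List.prefix_of_prefix_length_le (List.prefix_append l r) hpre (by omega)
      obtain ⟨s, rfl⟩ := hlp
      simp only [List.length_append] at hpu' hpv' hj
      have hsne : s ≠ [] := List.length_pos_iff.mp (by omega)
      have hsr : s <+: r := (List.prefix_append_right_inj l).mp hpre
      have hsv : s <:+ l' ++ r' := (List.suffix_append l s).trans hsuf
      have hM : r.length + (l' ++ r').length < N := by
        simp only [List.length_append]; omega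
      rcases (ih _ hM).1 r (l' ++ r') s (memFamR hk1 hk2 hr) hvF le_rfl hsne hsr hsv with
        h | h
      · have hc := congrArg List.length h
        omega
      · have hc := congrArg List.length h
        simp only [List.length_append] at hc
        omega
    rcases Nat.lt_or_ge k' p.length with hk | hk
    · -- p crosses the boundary of v = l' ++ r'
      have hrp : r' <:+ p :=
        List.suffix_of_suffix_length_le (List.suffix_append l' r') hsuf (by omega)
      obtain ⟨t, rfl⟩ := hrp
      simp only [List.length_append] at hpu' hpv' hk hj
      have htne : t ≠ [] := List.length_pos_iff.mp (by omega)
      have htl : t <:+ l' := suffix_cancel hsuf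
      have htu : t <+: l ++ r := ((t.prefix_append r').trans hpre)
      have hM : (l ++ r).length + l'.length < N := by
        simp only [List.length_append]; omega
      rcases (ih _ hM).1 (l ++ r) l' t huF (memFamL hj'1 hj'2 hl') le_rfl htne htu htl with
        h | h
      · have hc := congrArg List.length h
        simp only [List.length_append] at hc
        omega
      · have hc := congrArg List.length h
        omega
    · -- p is a prefix of l and a suffix of r'
      have hpl : p <+: l :=
        List.prefix_of_prefix_length_le hpre (List.prefix_append l r) (by omega)
      have hpr : p <:+ r' :=
        List.suffix_of_suffix_length_le hsuf (List.suffix_append l' r') (by omega)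
      have hM : l.length + r'.length < N := by omega
      rcases (ih _ hM).1 l r' p (memFamL hj1 hj2 hl) (memFamR hk'1 hk'2 hr') le_rfl
        hpne hpl hpr with h | h
      · -- p = l ∈ L j, and p is a suffix of r'
        subst h
        have hM2 : p.length + r'.length < N := by omega
        have heq := (ih _ hM2).2.1 j p r' hj1 hj2 hl (memFamR hk'1 hk'2 hr') le_rfl hpr
        subst heq
        have hjk : j = k' := by omega
        exact disj hp j hj1 hj2 p hl (hjk ▸ hr')
      · -- p = r' ∈ R k', and p is a prefix of l
        subst h
        have hM2 : p.length + l.length < N := by omega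
        have heq := (ih _ hM2).2.2 k' p l hk'1 hk'2 hr' (memFamL hj1 hj2 hl) le_rfl hpl
        subst heq
        have hjk : j = k' := by omega
        exact disj hp k' hk'1 hk'2 p (hjk ▸ hl) hr'
  -- QL : a word of L a is never a proper suffix of a family word
  · intro a w v ha1 ha2 hwL hvF hN hsuf
    by_contra hne
    have hwlen : w.length = a := lenW hp a ha1 ha2 w (Or.inl hwL)
    have hlt : w.length < v.length :=
      lt_of_le_of_ne hsuf.length_le (fun h => hne (hsuf.eq_of_length h))
    obtain ⟨j', k', l', r', hj'1, hj'2, hk'1, hk'2, hl', hr', rfl, hll', hlr'⟩ :=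
      factor hp hvF (by omega)
    simp only [List.length_append] at hlt hN
    rcases le_or_gt a k' with hak | hak
    · have h1 : w <:+ r' :=
        List.suffix_of_suffix_length_le hsuf (List.suffix_append l' r') (by omega)
      have hM : w.length + r'.length < N := by omega
      have heq := (ih _ hM).2.1 a w r' ha1 ha2 hwL (memFamR hk'1 hk'2 hr') le_rfl h1
      subst heq
      have hak' : a = k' := by omega
      exact disj hp a ha1 ha2 w hwL (hak' ▸ hr')
    · -- a > k' : w crosses the boundary of v
      have hrw : r' <:+ w :=
        List.suffix_of_suffix_length_le (List.suffix_append l' r') hsuf (by omega)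
      obtain ⟨t, rfl⟩ := hrw
      simp only [List.length_append] at hwlen hlt hN
      have htl : t <:+ l' := suffix_cancel hsuf
      have h2a : 2 ≤ a := by omega
      obtain ⟨b, c, l'', r'', hb1, hb2, hc1, hc2, hbc, hl'', hr'', heq, hll'', hlr''⟩ :=
        factorW hp h2a ha2 (Or.inl hwL)
      rcases lt_trichotomy c k' with hck | hck | hck
      · -- c < k' : t is a prefix of l''
        have htw : t <+: l'' ++ r'' := heq ▸ List.prefix_append t r'
        have htl'' : t <+: l'' :=
          List.prefix_of_prefix_length_le htw (List.prefix_append l'' r'') (by omega)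
        have htne : t ≠ [] := List.length_pos_iff.mp (by omega)
        have hM : l''.length + l'.length < N := by omega
        rcases (ih _ hM).1 l'' l' t (memFamL hb1 hb2 hl'') (memFamL hj'1 hj'2 hl') le_rfl
          htne htl'' htl with h | h
        · have hc := congrArg List.length h; omega
        · have hc := congrArg List.length h; omega
      · -- c = k' : r'' = r' and t = l''
        have hr'w : r'' <:+ t ++ r' := heq ▸ List.suffix_append l'' r''
        have hreq : r'' = r' :=
          (List.suffix_of_suffix_length_le hr'w (List.suffix_append t r')
            (by omega)).eq_of_length (by omega)
        subst hreq
        have hteq : t = l'' := List.append_cancel_right heq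
        subst hteq
        have hM : t.length + l'.length < N := by omega
        have hfin := (ih _ hM).2.1 b t l' hb1 hb2 hl'' (memFamL hj'1 hj'2 hl') le_rfl htl
        have hc := congrArg List.length hfin
        omega
      · -- c > k' : r' is a proper suffix of r''
        have hr'w : r'' <:+ t ++ r' := heq ▸ List.suffix_append l'' r''
        have hrr : r' <:+ r'' :=
          List.suffix_of_suffix_length_le (List.suffix_append t r') hr'w (by omega)
        obtain ⟨x, hx⟩ := hrr
        have heq2 := heq
        rw [← hx, ← List.append_assoc] at heq2
        have hxt : t = l'' ++ x := List.append_cancel_right heq2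
        have hxlen := congrArg List.length hx
        simp only [List.length_append] at hxlen
        have hxne : x ≠ [] := List.length_pos_iff.mp (by omega)
        have hxr : x <+: r'' := by rw [← hx]; exact List.prefix_append x r'
        rw [hxt] at htl
        have hxl : x <:+ l' := (List.suffix_append l'' x).trans htl
        have hM : r''.length + l'.length < N := by omega
        rcases (ih _ hM).1 r'' l' x (memFamR hc1 hc2 hr'') (memFamL hj'1 hj'2 hl') le_rfl
          hxne hxr hxl with h | h
        · have hc := congrArg List.length h; omega
        · have hc := congrArg List.length h
          have htlen := congrArg List.length hxt
          simp only [List.length_append] at htlen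
          omega
  -- QR : a word of R a is never a proper prefix of a family word
  · intro a w u ha1 ha2 hwR huF hN hpre
    by_contra hne
    have hwlen : w.length = a := lenW hp a ha1 ha2 w (Or.inr hwR)
    have hlt : w.length < u.length :=
      lt_of_le_of_ne hpre.length_le (fun h => hne (hpre.eq_of_length h))
    obtain ⟨j, k, l, r, hj1, hj2, hk1, hk2, hl, hr, rfl, hll, hlr⟩ :=
      factor hp huF (by omega)
    simp only [List.length_append] at hlt hN
    rcases le_or_gt a j with haj | haj
    · have h1 : w <+: l :=
        List.prefix_of_prefix_length_le hpre (List.prefix_append l r) (by omega)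
      have hM : w.length + l.length < N := by omega
      have heq := (ih _ hM).2.2 a w l ha1 ha2 hwR (memFamL hj1 hj2 hl) le_rfl h1
      subst heq
      have haj' : a = j := by omega
      exact disj hp a ha1 ha2 w (haj' ▸ hl) hwR
    · -- a > j : w crosses the boundary of u
      have hlw : l <+: w :=
        List.prefix_of_prefix_length_le (List.prefix_append l r) hpre (by omega)
      obtain ⟨t, rfl⟩ := hlw
      simp only [List.length_append] at hwlen hlt hN
      have htr : t <+: r := (List.prefix_append_right_inj l).mp hpre
      have h2a : 2 ≤ a := by omega
      obtain ⟨b, c, l'', r'', hb1, hb2, hc1, hc2, hbc, hl'', hr'', heq, hll'', hlr''⟩ :=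
        factorW hp h2a ha2 (Or.inr hwR)
      rcases lt_trichotomy b j with hbj | hbj | hbj
      · -- b < j : t is a suffix of r''
        have htw : t <:+ l'' ++ r'' := heq ▸ List.suffix_append l t
        have htr'' : t <:+ r'' :=
          List.suffix_of_suffix_length_le htw (List.suffix_append l'' r'') (by omega)
        have htne : t ≠ [] := List.length_pos_iff.mp (by omega)
        have hM : r.length + r''.length < N := by omega
        rcases (ih _ hM).1 r r'' t (memFamR hk1 hk2 hr) (memFamR hc1 hc2 hr'') le_rfl
          htne htr htr'' with h | h
        · have hc := congrArg List.length h; omega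
        · have hc := congrArg List.length h; omega
      · -- b = j : l'' = l and t = r''
        have hl'w : l'' <+: l ++ t := heq ▸ List.prefix_append l'' r''
        have hleq : l'' = l :=
          (List.prefix_of_prefix_length_le hl'w (List.prefix_append l t)
            (by omega)).eq_of_length (by omega)
        subst hleq
        have hteq : t = r'' := List.append_cancel_left heq
        subst hteq
        have hM : t.length + r.length < N := by omega
        have hfin := (ih _ hM).2.2 c t r hc1 hc2 hr'' (memFamR hk1 hk2 hr) le_rfl htr
        have hc := congrArg List.length hfin
        omega
      · -- b > j : l is a proper prefix of l''
        have hl'w : l'' <+: l ++ t := heq ▸ List.prefix_append l'' r''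
        have hll2 : l <+: l'' :=
          List.prefix_of_prefix_length_le (List.prefix_append l t) hl'w (by omega)
        obtain ⟨x, hx⟩ := hll2
        have heq2 := heq
        rw [← hx, List.append_assoc] at heq2
        have hxt : t = x ++ r'' := List.append_cancel_left heq2
        have hxlen := congrArg List.length hx
        simp only [List.length_append] at hxlen
        have hxne : x ≠ [] := List.length_pos_iff.mp (by omega)
        have hxl : x <:+ l'' := by rw [← hx]; exact List.suffix_append l x
        rw [hxt] at htr
        have hxr : x <+: r := (List.prefix_append x r'').trans htr
        have hM : r.length + l''.length < N := by omega
        rcases (ih _ hM).1 r l'' x (memFamR hk1 hk2 hr) (memFamL hb1 hb2 hl'') le_rfl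
          hxne hxr hxl with h | h
        · have hc := congrArg List.length h
          have htlen := congrArg List.length hxt
          simp only [List.length_append] at htlen
          omega
        · have hc := congrArg List.length h; omega

end Stmt7Aux

/-- No proper nonempty prefix of a word in `L i ∪ R i ∪ C` occurs as a proper suffix
of a word in `L j ∪ R j ∪ C`. -/
theorem stmt7 {α : Type*} (n : ℕ) (hn : 3 ≤ n) (L R : ℕ → Set (List α))
    (hpart : PartitionSystem n L R) :
    ∀ u v p : List α,
      (u ∈ (⋃ i ∈ Finset.Ico 1 n, catSet (L i) (R (n - i))) ∨
        ∃ i, 1 ≤ i ∧ i ≤ n - 1 ∧ u ∈ L i ∪ R i) →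
      (v ∈ (⋃ i ∈ Finset.Ico 1 n, catSet (L i) (R (n - i))) ∨
        ∃ j, 1 ≤ j ∧ j ≤ n - 1 ∧ v ∈ L j ∪ R j) →
      p ≠ [] → p ≠ u → p ≠ v → p <+: u → ¬ p <:+ v := by
  intro u v p hu hv hpne hpu hpv hpre hsuf
  have huF : u ∈ Stmt7Aux.Fam n L R := hu.elim Or.inr (fun ⟨i, h1, h2, h3⟩ => Or.inl ⟨i, h1, h2, h3⟩)
  have hvF : v ∈ Stmt7Aux.Fam n L R := hv.elim Or.inr (fun ⟨i, h1, h2, h3⟩ => Or.inl ⟨i, h1, h2, h3⟩)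
  rcases (Stmt7Aux.key hpart (u.length + v.length)).1 u v p huF hvF le_rfl hpne hpre hsuf with
    h | h
  · exact hpu h
  · exact hpv h
end

section
/- The sets L_i R_{n-i}, for i = 1, ..., n-1, are pairwise disjoint; consequently, |⋃_{i=1}^{n-1} L_i R_{n-i}| = Σ_{i=1}^{n-1} |L_i| · |R_{n-i}|. -/
/-!
Put `T = ⋃ L i` and `S = ⋃ R i` over `1 ≤ i < n`. Every word of `T ∪ S` of length at least two
lies in `TS`, and `T`, `S` are disjoint since the words of `L i ∪ R i` have length `i`. By
induction on length, no word of `T ∪ S` has a proper prefix in `S`, and every proper prefix of it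
lying in `T` is followed, inside it, by a word of `S`. Hence `x ∈ T` is determined by `xy` with
`y ∈ S`: if `x₁ ++ y₁ = x₂ ++ y₂` with `x₁` a proper prefix of `x₂`, then the word of `S` that
follows `x₁` inside `x₂` is a proper prefix of `y₁`. So the index `i` of a word of
`(L i)(R (n-i))` is the length of its `L`-part, and concatenation is injective on
`L i × R (n-i)`.
-/

section

variable {α : Type*}

structure SplitPair (T S : Set (List α)) : Prop where
  disjoint : Disjoint T S
  split : ∀ w ∈ T ∪ S, w.length = 1 ∨ w ∈ catSet T S

def NoProperPrefixIn (S : Set (List α)) (w : List α) : Prop :=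
  ∀ z ∈ S, z <+: w → z = w

def PrefixesExtend (T S : Set (List α)) (w : List α) : Prop :=
  ∀ x ∈ T, x <+: w → x ≠ w → ∃ y ∈ S, x ++ y <+: w

namespace SplitPair

variable {T S : Set (List α)}

theorem ne_nil (h : SplitPair T S) {w : List α} (hw : w ∈ T ∪ S) : w ≠ [] := by
  rintro rfl
  rcases h.split [] hw with hlen | ⟨x, hx, y, hy, hxy⟩
  · simp at hlen
  · obtain ⟨rfl, rfl⟩ := List.append_eq_nil_iff.mp hxy.symm
    exact h.disjoint.ne_of_mem hx hy rfl

theorem eq_of_prefix_of_length_eq_one (h : SplitPair T S) {v w : List α} (hv : v ∈ T ∪ S)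
    (hvw : v <+: w) (hw : w.length = 1) : v = w := by
  have hpos := List.length_pos_iff.mpr (h.ne_nil hv)
  exact hvw.eq_of_length (by have := hvw.length_le; omega)

theorem noProperPrefixIn_append (h : SplitPair T S) {x₀ y₀ : List α} (hx₀ : x₀ ∈ T)
    (hPx₀ : NoProperPrefixIn S x₀) (hPy₀ : NoProperPrefixIn S y₀)
    (hQ : ∀ v ∈ T ∪ S, v <+: x₀ ++ y₀ → v ≠ x₀ ++ y₀ → PrefixesExtend T S v) :
    NoProperPrefixIn S (x₀ ++ y₀) := by
  intro z hz hzw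
  rcases List.prefix_or_prefix_of_prefix hzw (List.prefix_append x₀ y₀) with hzx₀ | hx₀z
  · exact absurd (hPx₀ z hz hzx₀) (h.disjoint.ne_of_mem hx₀ hz).symm
  · by_contra hne
    obtain ⟨y, hy, hx₀y⟩ := hQ z (Or.inr hz) hzw hne x₀ hx₀ hx₀z (h.disjoint.ne_of_mem hx₀ hz)
    obtain rfl := hPy₀ y hy ((List.prefix_append_right_inj x₀).mp (hx₀y.trans hzw))
    exact hne (hzw.eq_of_length (le_antisymm hzw.length_le hx₀y.length_le))

theorem prefixesExtend_append {x₀ y₀ : List α} (hx₀ : x₀ ∈ T) (hy₀ : y₀ ∈ S)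
    (hQx₀ : PrefixesExtend T S x₀) (hPy₀ : NoProperPrefixIn S y₀)
    (hQ : ∀ v ∈ T ∪ S, v <+: x₀ ++ y₀ → v ≠ x₀ ++ y₀ → PrefixesExtend T S v) :
    PrefixesExtend T S (x₀ ++ y₀) := by
  intro x hx hxw hne
  by_cases hxx₀ : x = x₀
  · exact ⟨y₀, hy₀, hxx₀ ▸ List.prefix_rfl⟩
  rcases List.prefix_or_prefix_of_prefix hxw (List.prefix_append x₀ y₀) with hxx₀' | hx₀x
  · obtain ⟨y, hy, hxy⟩ := hQx₀ x hx hxx₀' hxx₀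
    exact ⟨y, hy, hxy.trans (List.prefix_append x₀ y₀)⟩
  · obtain ⟨y, hy, hx₀y⟩ := hQ x (Or.inl hx) hxw hne x₀ hx₀ hx₀x (Ne.symm hxx₀)
    obtain rfl := hPy₀ y hy ((List.prefix_append_right_inj x₀).mp (hx₀y.trans hxw))
    exact absurd (hxw.eq_of_length (le_antisymm hxw.length_le hx₀y.length_le)) hne

theorem noProperPrefixIn_and_prefixesExtend (h : SplitPair T S) {w : List α}
    (hw : w ∈ T ∪ S) : NoProperPrefixIn S w ∧ PrefixesExtend T S w := by
  rcases h.split w hw with hlen | ⟨x₀, hx₀, y₀, hy₀, rfl⟩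
  · exact ⟨fun z hz hzw => h.eq_of_prefix_of_length_eq_one (Or.inr hz) hzw hlen,
      fun x hx hxw hne => absurd (h.eq_of_prefix_of_length_eq_one (Or.inl hx) hxw hlen) hne⟩
  -- the length bounds below discharge the termination checks of the recursive calls
  have hx₀_pos := List.length_pos_iff.mpr (h.ne_nil (Or.inl hx₀))
  have hy₀_pos := List.length_pos_iff.mpr (h.ne_nil (Or.inr hy₀))
  have hx₀_lt : x₀.length < (x₀ ++ y₀).length := by simp only [List.length_append]; omega
  have hy₀_lt : y₀.length < (x₀ ++ y₀).length := by simp only [List.length_append]; omega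
  have ihx := h.noProperPrefixIn_and_prefixesExtend (Or.inl hx₀)
  have ihy := h.noProperPrefixIn_and_prefixesExtend (Or.inr hy₀)
  have ihpre : ∀ v ∈ T ∪ S, v <+: x₀ ++ y₀ → v ≠ x₀ ++ y₀ → PrefixesExtend T S v :=
    fun v hv hvw hne =>
      have : v.length < (x₀ ++ y₀).length :=
        lt_of_le_of_ne hvw.length_le fun hl => hne (hvw.eq_of_length hl)
      (h.noProperPrefixIn_and_prefixesExtend hv).2
  exact ⟨h.noProperPrefixIn_append hx₀ ihx.1 ihy.1 ihpre,
    prefixesExtend_append hx₀ hy₀ ihx.2 ihy.1 ihpre⟩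
termination_by w.length

theorem left_eq_of_append_eq_append (h : SplitPair T S) {x₁ y₁ x₂ y₂ : List α}
    (hx₁ : x₁ ∈ T) (hy₁ : y₁ ∈ S) (hx₂ : x₂ ∈ T) (hy₂ : y₂ ∈ S) (he : x₁ ++ y₁ = x₂ ++ y₂) :
    x₁ = x₂ := by
  wlog hpre : x₁ <+: x₂ generalizing x₁ y₁ x₂ y₂
  · have hpre' := (List.prefix_or_prefix_of_prefix (he ▸ List.prefix_append x₁ y₁)
      (List.prefix_append x₂ y₂)).resolve_left hpre
    exact (this hx₂ hy₂ hx₁ hy₁ he.symm hpre').symm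
  by_contra hne
  obtain ⟨y, hy, hx₁y⟩ := (h.noProperPrefixIn_and_prefixesExtend (Or.inl hx₂)).2 x₁ hx₁ hpre hne
  have hx₁y_pre : x₁ ++ y <+: x₁ ++ y₁ := he ▸ hx₁y.trans (List.prefix_append x₂ y₂)
  obtain rfl := (h.noProperPrefixIn_and_prefixesExtend (Or.inr hy₁)).1 y hy
    ((List.prefix_append_right_inj x₁).mp hx₁y_pre)
  have hlen := congrArg List.length he
  have := hx₁y.length_le
  simp only [List.length_append] at hlen this
  exact h.ne_nil (Or.inr hy₂) (List.length_eq_zero_iff.mp (by omega))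

end SplitPair

theorem ncard_catSet_of_length_eq {A B : Set (List α)} {k : ℕ} (hA : ∀ a ∈ A, a.length = k) :
    (catSet A B).ncard = A.ncard * B.ncard := by
  have himage : catSet A B = (fun p : List α × List α => p.1 ++ p.2) '' A ×ˢ B := by
    ext w
    simp only [catSet, Set.mem_ofPred_eq, Set.mem_image, Set.mem_prod, Prod.exists]
    exact ⟨fun ⟨a, ha, b, hb, hw⟩ => ⟨a, b, ⟨ha, hb⟩, hw.symm⟩,
      fun ⟨a, b, ⟨ha, hb⟩, hw⟩ => ⟨a, ha, b, hb, hw.symm⟩⟩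
  have hinj : Set.InjOn (fun p : List α × List α => p.1 ++ p.2) (A ×ˢ B) := by
    rintro ⟨a, b⟩ ⟨ha, -⟩ ⟨a', b'⟩ ⟨ha', -⟩ he
    obtain ⟨rfl, rfl⟩ := List.append_inj he ((hA a ha).trans (hA a' ha').symm)
    rfl
  rw [himage, hinj.ncard_image, Set.ncard_prod]

theorem tsub_mem_Ico_one {i n : ℕ} (hi : i ∈ Finset.Ico 1 n) : n - i ∈ Finset.Ico 1 n := by
  rw [Finset.mem_Ico] at hi ⊢
  omega

def blockUnion (n : ℕ) (L : ℕ → Set (List α)) : Set (List α) :=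
  ⋃ k ∈ Finset.Ico 1 n, L k

theorem mem_blockUnion {n k : ℕ} {L : ℕ → Set (List α)} {w : List α} (hk : k ∈ Finset.Ico 1 n)
    (hw : w ∈ L k) : w ∈ blockUnion n L :=
  Set.mem_biUnion hk hw

namespace PartitionSystem

variable {n : ℕ} {L R : ℕ → Set (List α)}

theorem eq_one_or_mem_catSet (hp : PartitionSystem n L R) {k : ℕ} (hk : k ∈ Finset.Ico 1 n)
    {w : List α} (hw : w ∈ L k ∪ R k) :
    (k = 1 ∧ w.length = 1) ∨ ∃ j ∈ Finset.Ico 1 k, w ∈ catSet (L j) (R (k - j)) := by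
  rw [Finset.mem_Ico] at hk
  obtain rfl | hk2 := eq_or_lt_of_le hk.1
  · rw [hp.1] at hw
    exact Or.inl ⟨rfl, hw⟩
  · rw [(hp.2.2.2.2 k hk2 (by omega)).1] at hw
    obtain ⟨j, hj, hwj⟩ := Set.mem_iUnion₂.mp hw
    exact Or.inr ⟨j, hj, hwj⟩

theorem inter_eq_empty (hp : PartitionSystem n L R) {k : ℕ} (hk : k ∈ Finset.Ico 1 n) :
    L k ∩ R k = ∅ := by
  rw [Finset.mem_Ico] at hk
  obtain rfl | hk2 := eq_or_lt_of_le hk.1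
  · exact hp.2.1
  · exact (hp.2.2.2.2 k hk2 (by omega)).2

theorem length_eq (hp : PartitionSystem n L R) {k : ℕ} (hk : k ∈ Finset.Ico 1 n)
    {w : List α} (hw : w ∈ L k ∪ R k) : w.length = k := by
  rcases hp.eq_one_or_mem_catSet hk hw with ⟨rfl, hlen⟩ | ⟨j, hj, x, hx, y, hy, rfl⟩
  · exact hlen
  have hk' := Finset.mem_Ico.mp hk
  have hj' := Finset.mem_Ico.mp hj
  have : j < k := hj'.2
  have : k - j < k := by omega
  have hxl := hp.length_eq (k := j) (Finset.mem_Ico.mpr ⟨hj'.1, by omega⟩) (Or.inl hx)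
  have hyl := hp.length_eq (k := k - j) (Finset.mem_Ico.mpr ⟨by omega, by omega⟩) (Or.inr hy)
  rw [List.length_append, hxl, hyl]
  omega
termination_by k

theorem disjoint_left_right (hp : PartitionSystem n L R) {k m : ℕ} (hk : k ∈ Finset.Ico 1 n)
    (hm : m ∈ Finset.Ico 1 n) : Disjoint (L k) (R m) := by
  rw [Set.disjoint_left]
  intro w hwL hwR
  obtain rfl : k = m := (hp.length_eq hk (Or.inl hwL)).symm.trans (hp.length_eq hm (Or.inr hwR))
  exact (Set.eq_empty_iff_forall_notMem.mp (hp.inter_eq_empty hk)) w ⟨hwL, hwR⟩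

theorem splitPair (hp : PartitionSystem n L R) : SplitPair (blockUnion n L) (blockUnion n R) where
  disjoint := by
    simp only [blockUnion, Set.disjoint_iUnion_left, Set.disjoint_iUnion_right]
    exact fun m hm k hk => hp.disjoint_left_right hk hm
  split := by
    intro w hw
    obtain ⟨k, hk, hwk⟩ : ∃ k ∈ Finset.Ico 1 n, w ∈ L k ∪ R k := by
      simpa only [blockUnion, Set.mem_union, Set.mem_iUnion₂, exists_prop, ← exists_or,
        ← and_or_left] using hw
    rcases hp.eq_one_or_mem_catSet hk hwk with ⟨-, hlen⟩ | ⟨j, hj, x, hx, y, hy, rfl⟩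
    · exact Or.inl hlen
    have hk' := Finset.mem_Ico.mp hk
    have hj' := Finset.mem_Ico.mp hj
    exact Or.inr ⟨x, mem_blockUnion (Finset.mem_Ico.mpr ⟨hj'.1, by omega⟩) hx,
      y, mem_blockUnion (Finset.mem_Ico.mpr ⟨by omega, by omega⟩) hy, rfl⟩

theorem pairwiseDisjoint_catSet (hp : PartitionSystem n L R) :
    (Finset.Ico 1 n : Set ℕ).PairwiseDisjoint fun i => catSet (L i) (R (n - i)) := by
  intro i hi j hj hij
  rw [Function.onFun, Set.disjoint_left]
  rintro _ ⟨a, ha, b, hb, rfl⟩ ⟨c, hc, d, hd, he⟩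
  have hac := hp.splitPair.left_eq_of_append_eq_append (mem_blockUnion hi ha)
    (mem_blockUnion (tsub_mem_Ico_one hi) hb) (mem_blockUnion hj hc)
    (mem_blockUnion (tsub_mem_Ico_one hj) hd) he
  exact hij ((hp.length_eq hi (Or.inl ha)).symm.trans (hac ▸ hp.length_eq hj (Or.inl hc)))

theorem finite_catSet [Finite α] (hp : PartitionSystem n L R) {i : ℕ} (hi : i ∈ Finset.Ico 1 n) :
    (catSet (L i) (R (n - i))).Finite := by
  refine (List.finite_length_eq α n).subset ?_
  rintro _ ⟨a, ha, b, hb, rfl⟩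
  have hi' := Finset.mem_Ico.mp hi
  have hal := hp.length_eq hi (Or.inl ha)
  have hbl := hp.length_eq (tsub_mem_Ico_one hi) (Or.inr hb)
  simp only [Set.mem_ofPred_eq, List.length_append]
  omega

end PartitionSystem

end

theorem stmt11_general {α : Type*} [Fintype α] (n : ℕ) (L R : ℕ → Set (List α))
    (hpart : PartitionSystem n L R) :
    (∀ i ∈ Finset.Ico 1 n, ∀ j ∈ Finset.Ico 1 n, i ≠ j →
      Disjoint (catSet (L i) (R (n - i))) (catSet (L j) (R (n - j)))) ∧
    (⋃ i ∈ Finset.Ico 1 n, catSet (L i) (R (n - i))).ncard =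
      ∑ i ∈ Finset.Ico 1 n, (L i).ncard * (R (n - i)).ncard := by
  have hdisj := hpart.pairwiseDisjoint_catSet
  refine ⟨fun i hi j hj hij => hdisj hi hj hij, ?_⟩
  rw [← Finset.set_biUnion_coe,
    (Finset.finite_toSet _).ncard_biUnion (fun i hi => hpart.finite_catSet hi) hdisj,
    finsum_mem_coe_finset]
  exact Finset.sum_congr rfl fun i hi =>
    ncard_catSet_of_length_eq fun a ha => hpart.length_eq hi (Or.inl ha)

/-- The sets `(L i)(R (n-i))` are pairwise disjoint; consequently the size of their
union is `∑ |L i|·|R (n-i)|`. -/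
theorem stmt11 {α : Type*} [Fintype α] (n : ℕ) (hn : 3 ≤ n) (L R : ℕ → Set (List α))
    (hpart : PartitionSystem n L R) :
    (∀ i ∈ Finset.Ico 1 n, ∀ j ∈ Finset.Ico 1 n, i ≠ j →
      Disjoint (catSet (L i) (R (n - i))) (catSet (L j) (R (n - j)))) ∧
    (⋃ i ∈ Finset.Ico 1 n, catSet (L i) (R (n - i))).ncard =
      ∑ i ∈ Finset.Ico 1 n, (L i).ncard * (R (n - i)).ncard :=
  stmt11_general n L R hpart
end

section
/- Every maximal non-overlapping code X ⊆ Σ^n (n ≥ 3) arises from the partition construction: there exist a partition (L_1, R_1) of Σ into nonempty parts and, for 2 ≤ i ≤ n-1, partitions (L_i, R_i) of ⋃_{j=1}^{i-1} L_j R_{i-j}, such that X = ⋃_{i=1}^{n-1} L_i R_{n-i}. -/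
/-!
Let `S` be the set of nonempty proper suffixes of codewords and `P` that of nonempty proper
prefixes; non-overlap says exactly that `S` and `P` are disjoint. Call a word admissible if it is
a single letter or a concatenation `l r` of admissible words with `l ∉ S` and `r ∈ S`, and take
`L i`, `R i` to be the admissible words of length `i` outside, resp. inside, `S`. These form a
partition system by construction, so it remains to show that the admissible words of length `n`
are exactly the codewords.

By induction on admissibility, no nonempty proper prefix of an admissible word lies in `S`, no
nonempty proper suffix lies in `P`, and an admissible word has no border. Hence an admissible
word of length `n` overlaps neither itself nor any codeword, and maximality puts it in `X`.
Conversely, in a codeword `x` every nonempty prefix avoids `S`; starting from the last letter and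
repeatedly prepending an admissible factor outside `S` to the current admissible suffix (which is
in `S` as long as it is proper) shows that `x` itself is admissible.
-/

namespace List

variable {α : Type*} {p s l m : List α}

theorem IsPrefix.exists_eq_append_of_append (h : p <+: l ++ m) (hl : l.length ≤ p.length) :
    ∃ q, p = l ++ q ∧ q <+: m := by
  obtain ⟨q, rfl⟩ := prefix_of_prefix_length_le (prefix_append l m) h hl
  exact ⟨q, rfl, (prefix_append_right_inj l).mp h⟩

theorem IsSuffix.exists_eq_append_of_append (h : s <:+ l ++ m) (hm : m.length ≤ s.length) :
    ∃ q, s = q ++ m ∧ q <:+ l := by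
  obtain ⟨q, rfl⟩ := suffix_of_suffix_length_le (suffix_append l m) h hm
  exact ⟨q, rfl, suffix_append_self_iff.mp h⟩

end List

namespace NonOverlappingCode

variable {α : Type*} (X : Set (List α))

def properSuffixes : Set (List α) :=
  {v | v ≠ [] ∧ ∃ x ∈ X, v <:+ x ∧ v ≠ x}

def properPrefixes : Set (List α) :=
  {v | v ≠ [] ∧ ∃ x ∈ X, v <+: x ∧ v ≠ x}

inductive Admissible : List α → Prop
  | singleton (c : α) : Admissible [c]
  | append {l r : List α} : Admissible l → l ∉ properSuffixes X → Admissible r →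
      r ∈ properSuffixes X → Admissible (l ++ r)

def leftPart (i : ℕ) : Set (List α) :=
  {u | Admissible X u ∧ u.length = i ∧ u ∉ properSuffixes X}

def rightPart (i : ℕ) : Set (List α) :=
  {u | Admissible X u ∧ u.length = i ∧ u ∈ properSuffixes X}

variable {X}

theorem mem_properSuffixes_of_suffix {v w : List α} (hw : w ∈ properSuffixes X) (h : v <:+ w)
    (hv : v ≠ []) : v ∈ properSuffixes X := by
  obtain ⟨-, x, hx, hwx, hne⟩ := hw
  refine ⟨hv, x, hx, h.trans hwx, ?_⟩
  rintro rfl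
  exact hne (hwx.eq_of_length_le h.length_le)

theorem mem_properPrefixes_of_prefix {v w : List α} (hw : w ∈ properPrefixes X) (h : v <+: w)
    (hv : v ≠ []) : v ∈ properPrefixes X := by
  obtain ⟨-, x, hx, hwx, hne⟩ := hw
  refine ⟨hv, x, hx, h.trans hwx, ?_⟩
  rintro rfl
  exact hne (hwx.eq_of_length_le h.length_le)

theorem length_lt_of_mem_properSuffixes {n : ℕ} (hlen : ∀ w ∈ X, w.length = n) {v : List α}
    (hv : v ∈ properSuffixes X) : v.length < n := by
  obtain ⟨-, x, hx, hvx, hne⟩ := hv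
  exact hlen x hx ▸ lt_of_le_of_ne hvx.length_le (mt hvx.eq_of_length hne)

theorem disjoint_properPrefixes_properSuffixes (hcode : ∀ u ∈ X, ∀ v ∈ X, NonOverlap u v) :
    Disjoint (properPrefixes X) (properSuffixes X) :=
  Set.disjoint_left.mpr fun p ⟨hp, x, hx, hpx, hne⟩ ⟨_, y, hy, hpy, _⟩ =>
    (hcode x hx y hy).1 p hp hne hpx hpy

theorem admissible_of_length_eq_one {u : List α} (h : u.length = 1) : Admissible X u := by
  obtain ⟨c, rfl⟩ := List.length_eq_one_iff.mp h
  exact .singleton c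

namespace Admissible

theorem ne_nil {u : List α} (hu : Admissible X u) : u ≠ [] := by
  induction hu with
  | singleton c => exact List.cons_ne_nil c []
  | append _ _ _ _ ihl => exact List.append_ne_nil_of_left_ne_nil ihl _

theorem notMem_properSuffixes_of_prefix {u p : List α} (hu : Admissible X u) (hp : p <+: u)
    (hp0 : p ≠ []) (hpu : p ≠ u) : p ∉ properSuffixes X := by
  induction hu generalizing p with
  | singleton c => exact absurd (hp.eq_of_length_le (List.length_pos_iff.mpr hp0)) hpu
  | @append l r _ hlS _ _ ihl ihr =>
    rcases le_or_gt p.length l.length with h | h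
    · obtain rfl | hpl := eq_or_ne p l
      · exact hlS
      · exact ihl ((List.isPrefix_append_of_length h).mp hp) hp0 hpl
    · obtain ⟨q, rfl, hq⟩ := hp.exists_eq_append_of_append h.le
      have hq0 : q ≠ [] := by rintro rfl; simp at h
      exact fun hS => ihr hq hq0 (by rintro rfl; exact hpu rfl)
        (mem_properSuffixes_of_suffix hS (List.suffix_append l q) hq0)

theorem notMem_properPrefixes_of_suffix (hcode : ∀ u ∈ X, ∀ v ∈ X, NonOverlap u v)
    {u s : List α} (hu : Admissible X u) (hs : s <:+ u) (hs0 : s ≠ []) (hsu : s ≠ u) :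
    s ∉ properPrefixes X := by
  induction hu generalizing s with
  | singleton c => exact absurd (hs.eq_of_length_le (List.length_pos_iff.mpr hs0)) hsu
  | @append l r _ _ _ hrS ihl ihr =>
    rcases le_or_gt s.length r.length with h | h
    · obtain rfl | hsr := eq_or_ne s r
      · exact fun hP => (disjoint_properPrefixes_properSuffixes hcode).notMem_of_mem_left hP hrS
      · exact ihr (List.suffix_of_suffix_length_le hs (List.suffix_append l r) h) hs0 hsr
    · obtain ⟨q, rfl, hq⟩ := hs.exists_eq_append_of_append h.le
      have hq0 : q ≠ [] := by rintro rfl; simp at h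
      exact fun hP => ihl hq hq0 (by rintro rfl; exact hsu rfl)
        (mem_properPrefixes_of_prefix hP (List.prefix_append q r) hq0)

theorem noPS_self {u : List α} (hu : Admissible X u) : NoPS u u := by
  intro p hp0 hpu hpre hsuf
  induction hu generalizing p with
  | singleton c => exact hpu (hpre.eq_of_length_le (List.length_pos_iff.mpr hp0))
  | @append l r hl hlS hr hrS ihl _ =>
    have hu := Admissible.append hl hlS hr hrS
    rcases le_or_gt p.length r.length with h | h
    · have hpS := mem_properSuffixes_of_suffix hrS
        (List.suffix_of_suffix_length_le hsuf (List.suffix_append l r) h) hp0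
      exact hu.notMem_properSuffixes_of_prefix hpre hp0 hpu hpS
    · -- `p = s r`, and then `s` is a border of `l`
      obtain ⟨s, rfl, hs⟩ := hsuf.exists_eq_append_of_append h.le
      have hsl : s.length < l.length := by
        have := lt_of_le_of_ne hpre.length_le (mt hpre.eq_of_length hpu)
        simpa using this
      exact ihl s (by rintro rfl; simp at h) (by rintro rfl; simp at hsl)
        ((List.isPrefix_append_of_length hsl.le).mp ((List.prefix_append s r).trans hpre)) hs

theorem nonOverlap_of_mem (hcode : ∀ u ∈ X, ∀ v ∈ X, NonOverlap u v) {w x : List α}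
    (hw : Admissible X w) (hx : x ∈ X) (hlen : w.length = x.length) : NonOverlap w x := by
  constructor
  · intro p hp0 hpw hpre hsuf
    have hpx : p ≠ x := by
      rintro rfl
      exact hpw (hpre.eq_of_length hlen.symm)
    exact hw.notMem_properSuffixes_of_prefix hpre hp0 hpw ⟨hp0, x, hx, hsuf, hpx⟩
  · intro p hp0 hpx hpre hsuf
    have hpw : p ≠ w := by
      rintro rfl
      exact hpx (hpre.eq_of_length hlen)
    exact hw.notMem_properPrefixes_of_suffix hcode hsuf hp0 hpw ⟨hp0, x, hx, hpre, hpx⟩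

theorem mem_of_maximal {n : ℕ} (hlen : ∀ w ∈ X, w.length = n)
    (hcode : ∀ u ∈ X, ∀ v ∈ X, NonOverlap u v)
    (hmaximal : ∀ w : List α, w.length = n → w ∉ X →
      ∃ u ∈ insert w X, ∃ v ∈ insert w X, ¬ NonOverlap u v)
    {w : List α} (hw : Admissible X w) (hwn : w.length = n) : w ∈ X := by
  by_contra hwX
  obtain ⟨u, hu, v, hv, huv⟩ := hmaximal w hwn hwX
  apply huv
  rcases hu with rfl | hu <;> rcases hv with rfl | hv
  · exact ⟨hw.noPS_self, hw.noPS_self⟩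
  · exact hw.nonOverlap_of_mem hcode hv (by rw [hwn, hlen v hv])
  · exact (hw.nonOverlap_of_mem hcode hu (by rw [hwn, hlen u hu])).symm
  · exact hcode u hu v hv

end Admissible

theorem exists_le_admissible_drop_notMem {y : List α}
    (hy : ∀ p, p <+: y → p ≠ [] → p ∉ properSuffixes X) (k : ℕ) (hk : k < y.length)
    (hadm : Admissible X (y.drop k)) :
    ∃ j ≤ k, Admissible X (y.drop j) ∧ y.drop j ∉ properSuffixes X := by
  induction k using Nat.strong_induction_on with
  | _ k ihk =>
  by_cases hS : y.drop k ∈ properSuffixes X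
  swap
  · exact ⟨k, le_rfl, hadm, hS⟩
  obtain _ | k := k
  · exact absurd hS (hy y (List.prefix_refl y) (List.ne_nil_of_length_pos hk))
  obtain ⟨j, hjk, hj, hjS⟩ := exists_le_admissible_drop_notMem (y := y.take (k + 1))
    (fun p hp => hy p (hp.trans (List.take_prefix _ y))) k (by simp; omega)
    (admissible_of_length_eq_one (by simp; omega))
  have hsplit : (y.take (k + 1)).drop j ++ y.drop (k + 1) = y.drop j := by
    have := List.drop_take_append_drop y j (k + 1 - j)
    rwa [Nat.add_sub_cancel' (by omega), ← List.drop_take] at this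
  obtain ⟨i, hij, hi⟩ := ihk j (by omega) (by omega) (hsplit ▸ hj.append hjS hadm hS)
  exact ⟨i, by omega, hi⟩
termination_by y.length

theorem admissible_of_mem {n : ℕ} (hlen : ∀ w ∈ X, w.length = n)
    (hcode : ∀ u ∈ X, ∀ v ∈ X, NonOverlap u v) {x : List α} (hx : x ∈ X) (hn : 1 ≤ n) :
    Admissible X x := by
  have hxn := hlen x hx
  have hprefix : ∀ p, p <+: x → p ≠ [] → p ∉ properSuffixes X := by
    intro p hp hp0 hpS
    obtain rfl | hpx := eq_or_ne p x
    · exact (length_lt_of_mem_properSuffixes hlen hpS).ne hxn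
    · exact (disjoint_properPrefixes_properSuffixes hcode).notMem_of_mem_left
        ⟨hp0, x, hx, hp, hpx⟩ hpS
  obtain ⟨j, -, hj, hjS⟩ := exists_le_admissible_drop_notMem hprefix (n - 1) (by omega)
    (admissible_of_length_eq_one (by simp; omega))
  obtain rfl | hj0 := Nat.eq_zero_or_pos j
  · simpa using hj
  · refine absurd ⟨hj.ne_nil, x, hx, List.drop_suffix j x, fun h => ?_⟩ hjS
    have := congrArg List.length h
    simp at this
    omega

theorem leftPart_union_rightPart (i : ℕ) :
    leftPart X i ∪ rightPart X i = {u | Admissible X u ∧ u.length = i} := by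
  ext u
  simp only [leftPart, rightPart, Set.mem_union, Set.mem_ofPred_eq]
  tauto

theorem leftPart_inter_rightPart (i : ℕ) : leftPart X i ∩ rightPart X i = ∅ := by
  ext u
  simp only [leftPart, rightPart, Set.mem_inter_iff, Set.mem_ofPred_eq, Set.mem_empty_iff_false,
    iff_false]
  tauto

theorem iUnion_catSet_leftPart_rightPart {i : ℕ} (hi : 2 ≤ i) :
    ⋃ j ∈ Finset.Ico 1 i, catSet (leftPart X j) (rightPart X (i - j)) =
      {u | Admissible X u ∧ u.length = i} := by
  ext u
  simp only [Set.mem_iUnion, Finset.mem_Ico, Set.mem_ofPred_eq, exists_prop]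
  constructor
  · rintro ⟨j, hj, l, ⟨hl, hlj, hlS⟩, r, ⟨hr, hrj, hrS⟩, rfl⟩
    exact ⟨hl.append hlS hr hrS, by simp; omega⟩
  · rintro ⟨hu, rfl⟩
    cases hu with
    | singleton c => simp at hi
    | @append l r hl hlS hr hrS =>
      have hr0 := List.length_pos_iff.mpr hr.ne_nil
      exact ⟨l.length, ⟨List.length_pos_iff.mpr hl.ne_nil, by simpa using hr0⟩,
        l, ⟨hl, rfl, hlS⟩, r, ⟨hr, by simp, hrS⟩, rfl⟩

theorem partitionSystem_leftPart_rightPart (hcode : ∀ u ∈ X, ∀ v ∈ X, NonOverlap u v)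
    {x : List α} (hx : x ∈ X) (hx2 : 2 ≤ x.length) (n : ℕ) :
    PartitionSystem n (leftPart X) (rightPart X) := by
  refine ⟨?_, leftPart_inter_rightPart 1, ?_, ?_,
    fun i hi _ => ⟨?_, leftPart_inter_rightPart i⟩⟩
  · rw [leftPart_union_rightPart]
    ext u
    exact ⟨And.right, fun h => ⟨admissible_of_length_eq_one h, h⟩⟩
  · have hx0 : x ≠ [] := List.ne_nil_of_length_pos (by omega)
    obtain ⟨c, t, rfl⟩ := List.exists_cons_of_ne_nil hx0
    have hcP : [c] ∈ properPrefixes X :=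
      ⟨by simp, _, hx, by simp, fun h => by simp [← h] at hx2⟩
    exact ⟨[c], .singleton c, rfl,
      (disjoint_properPrefixes_properSuffixes hcode).notMem_of_mem_left hcP⟩
  · have hlast : (x.drop (x.length - 1)).length = 1 := by simp; omega
    refine ⟨_, admissible_of_length_eq_one hlast, hlast, ?_⟩
    exact ⟨List.ne_nil_of_length_pos (by omega), x, hx, List.drop_suffix _ x,
      fun h => by rw [h] at hlast; omega⟩
  · rw [leftPart_union_rightPart, iUnion_catSet_leftPart_rightPart hi]

theorem noPS_cons_replicate {a b : α} (hab : a ≠ b) (m : ℕ) :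
    NoPS (a :: List.replicate m b) (a :: List.replicate m b) := by
  intro p hp0 hpw hpre hsuf
  obtain ⟨c, t, rfl⟩ := List.exists_cons_of_ne_nil hp0
  have hca : c = a := (List.cons_prefix_cons.mp hpre).1
  have hcb : c = b := by
    rcases List.suffix_cons_iff.mp hsuf with h | h
    · exact absurd h hpw
    · exact List.eq_of_mem_replicate (h.subset List.mem_cons_self)
  exact hab (hca.symm.trans hcb)

theorem nonempty_of_maximal [Nontrivial α] {n : ℕ} (hn : 1 ≤ n)
    (hmaximal : ∀ w : List α, w.length = n → w ∉ X →
      ∃ u ∈ insert w X, ∃ v ∈ insert w X, ¬ NonOverlap u v) :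
    X.Nonempty := by
  rw [Set.nonempty_iff_ne_empty]
  rintro rfl
  obtain ⟨a, b, hab⟩ := exists_pair_ne α
  obtain ⟨u, hu, v, hv, huv⟩ :=
    hmaximal (a :: List.replicate (n - 1) b) (by simp; omega) (Set.notMem_empty _)
  rw [Set.mem_insert_iff, Set.mem_empty_iff_false, or_false] at hu hv
  subst hu hv
  exact huv ⟨noPS_cons_replicate hab _, noPS_cons_replicate hab _⟩

end NonOverlappingCode

open NonOverlappingCode in
/-- Every maximal non-overlapping code arises from the partition construction. -/
theorem stmt12 {α : Type*} [Fintype α] (hq : 2 ≤ Fintype.card α) (n : ℕ) (hn : 3 ≤ n)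
    (X : Set (List α)) (hlen : ∀ w ∈ X, w.length = n)
    (hcode : ∀ u ∈ X, ∀ v ∈ X, NonOverlap u v)
    (hmaximal : ∀ w : List α, w.length = n → w ∉ X →
      ∃ u ∈ insert w X, ∃ v ∈ insert w X, ¬ NonOverlap u v) :
    ∃ L R : ℕ → Set (List α), PartitionSystem n L R ∧
      X = ⋃ i ∈ Finset.Ico 1 n, catSet (L i) (R (n - i)) := by
  have : Nontrivial α := Fintype.one_lt_card_iff_nontrivial.mp hq
  obtain ⟨x, hx⟩ := nonempty_of_maximal (by omega) hmaximal
  refine ⟨leftPart X, rightPart X,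
    partitionSystem_leftPart_rightPart hcode hx (by rw [hlen x hx]; omega) n, ?_⟩
  rw [iUnion_catSet_leftPart_rightPart (by omega)]
  ext w
  exact ⟨fun hw => ⟨admissible_of_mem hlen hcode hw (by omega), hlen w hw⟩,
    fun ⟨hw, hwn⟩ => hw.mem_of_maximal hlen hcode hmaximal hwn⟩
end

section
/- For integers q ≥ 2 and n ≥ 3 with (n-1)q ≡ m (mod n) and 0 ≤ m ≤ n, the function f(l) = (q - l) l^{n-1} on integers 1 ≤ l ≤ q-1 attains its maximum at l = (n-1)q/n when n divides q, at l = ⌈(n-1)q/n⌉ when m = n-1, and at l = ⌊(n-1)q/n⌋ when 1 ≤ m ≤ n/2. -/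
private lemma bern_up : ∀ (k : ℕ) (l : ℤ), 0 ≤ l → l ^ k * (l + k + 1) ≤ (l + 1) ^ (k + 1) := by
  intro k
  induction k with
  | zero => intro l hl; norm_num
  | succ k ih =>
    intro l hl
    have h1 : l * (l + ((k:ℤ)+1) + 1) ≤ (l + 1) * (l + k + 1) := by nlinarith
    have h5 := mul_le_mul_of_nonneg_left (ih l hl) (by linarith : (0:ℤ) ≤ l + 1)
    calc l ^ (k+1) * (l + ((k+1:ℕ):ℤ) + 1)
        = l ^ k * (l * (l + ((k:ℤ)+1) + 1)) := by push_cast; ring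
      _ ≤ l ^ k * ((l+1) * (l + k + 1)) :=
          mul_le_mul_of_nonneg_left h1 (pow_nonneg hl k)
      _ = (l+1) * (l ^ k * (l + k + 1)) := by ring
      _ ≤ (l+1) * ((l+1)^(k+1)) := h5
      _ = (l+1)^(k+1+1) := by ring

private lemma bern_down : ∀ (k : ℕ) (Y : ℤ), 1 ≤ Y → Y ^ k * (Y - k) ≤ Y * (Y - 1) ^ k := by
  intro k
  induction k with
  | zero => intro Y hY; norm_num
  | succ k ih =>
    intro Y hY
    have h1 : Y * (Y - ((k:ℤ)+1)) ≤ (Y - 1) * (Y - k) := by nlinarith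
    have h5 := mul_le_mul_of_nonneg_left (ih Y hY) (by linarith : (0:ℤ) ≤ Y - 1)
    calc Y ^ (k+1) * (Y - ((k+1:ℕ):ℤ))
        = Y ^ k * (Y * (Y - ((k:ℤ)+1))) := by push_cast; ring
      _ ≤ Y ^ k * ((Y - 1) * (Y - k)) :=
          mul_le_mul_of_nonneg_left h1 (pow_nonneg (by linarith) k)
      _ = (Y - 1) * (Y ^ k * (Y - k)) := by ring
      _ ≤ (Y - 1) * (Y * (Y - 1)^k) := h5
      _ = Y * (Y - 1)^(k+1) := by ring

private lemma stepA (Q u : ℤ) (e : ℕ) (he : 2 ≤ e) (hu : 1 ≤ u) (huQ : u + 1 ≤ Q)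
    (hc : u ≤ (e:ℤ) * (Q - u - 1)) :
    (Q - u) * u ^ e ≤ (Q - (u + 1)) * (u + 1) ^ e := by
  have hu0 : (0:ℤ) ≤ u := by linarith
  have hb := bern_up (e-1) u hu0
  rw [show e - 1 + 1 = e from by omega] at hb
  have hcast : ((e-1:ℕ):ℤ) = (e:ℤ) - 1 := by omega
  rw [hcast] at hb
  have key : (Q - u) * u ≤ (Q - u - 1) * (u + ((e:ℤ) - 1) + 1) := by nlinarith [hc]
  have h0 : (0:ℤ) ≤ Q - u - 1 := by linarith
  have hpe : u ^ e = u^(e-1) * u := by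
    conv_lhs => rw [show e = (e-1)+1 from by omega]
    rw [pow_succ]
  calc (Q - u) * u ^ e = u^(e-1) * ((Q - u) * u) := by rw [hpe]; ring
    _ ≤ u^(e-1) * ((Q - u - 1) * (u + ((e:ℤ)-1) + 1)) :=
        mul_le_mul_of_nonneg_left key (pow_nonneg hu0 _)
    _ = (Q - u - 1) * (u^(e-1) * (u + ((e:ℤ)-1) + 1)) := by ring
    _ ≤ (Q - u - 1) * (u+1)^e := mul_le_mul_of_nonneg_left hb h0
    _ = (Q - (u+1)) * (u+1)^e := by ring

private lemma stepB (Q u : ℤ) (e : ℕ) (he : 2 ≤ e) (hu : 1 ≤ u)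
    (hc : (e:ℤ) * (Q - u) ≤ u + 1) :
    (Q - (u + 1)) * (u + 1) ^ e ≤ (Q - u) * u ^ e := by
  have hu0 : (0:ℤ) ≤ u := by linarith
  rcases le_or_gt Q (u+1) with hq | hq
  · have h1 : Q - (u+1) ≤ 0 := by linarith
    have h2 : u^e ≤ (u+1)^e := pow_le_pow_left₀ hu0 (by linarith) e
    have h3 : (0:ℤ) ≤ u^e := pow_nonneg hu0 e
    calc (Q - (u+1)) * (u+1)^e ≤ (Q - (u+1)) * u^e := by nlinarith
      _ ≤ (Q - u) * u^e := by nlinarith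
  · have he2 : (2:ℤ) ≤ (e:ℤ) := by exact_mod_cast he
    have hup : (e:ℤ) + e ≤ u + 1 := by
      nlinarith [mul_nonneg (by linarith : (0:ℤ) ≤ (e:ℤ)) (by linarith : (0:ℤ) ≤ Q - u - 2)]
    have hpos : (0:ℤ) < u + 1 - e := by linarith
    have hb := bern_down e (u+1) (by linarith)
    rw [show (u + 1 - 1 : ℤ) = u from by ring] at hb
    have key : (Q - u - 1) * (u + 1) ≤ (Q - u) * (u + 1 - e) := by nlinarith [hc]
    have main : ((Q - (u+1)) * (u+1)^e) * (u + 1 - e) ≤ ((Q - u) * u^e) * (u + 1 - e) := by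
      calc ((Q - (u+1)) * (u+1)^e) * (u+1-(e:ℤ))
          = (Q - u - 1) * ((u+1)^e * ((u+1) - e)) := by ring
        _ ≤ (Q - u - 1) * ((u+1) * u^e) :=
            mul_le_mul_of_nonneg_left hb (by linarith)
        _ = ((Q - u - 1) * (u+1)) * u^e := by ring
        _ ≤ ((Q - u) * (u+1-e)) * u^e :=
            mul_le_mul_of_nonneg_right key (pow_nonneg hu0 e)
        _ = ((Q - u) * u^e) * (u+1-(e:ℤ)) := by ring
    exact le_of_mul_le_mul_right main hpos

private lemma chainUp (Q : ℤ) (e : ℕ) (he : 2 ≤ e) :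
    ∀ (d : ℕ) (u : ℤ), 1 ≤ u → u + d ≤ Q → u + d ≤ (e:ℤ) * (Q - (u + d)) + 1 →
      (Q - u) * u^e ≤ (Q - (u + d)) * (u + d)^e := by
  intro d
  induction d with
  | zero => intro u hu _ _; norm_num
  | succ d ih =>
    intro u hu hQ hc
    have hd0 : (0:ℤ) ≤ (d:ℤ) := by positivity
    have he0 : (0:ℤ) ≤ (e:ℤ) := by positivity
    have hdd : (u + ((d+1:ℕ):ℤ)) = (u + 1) + (d:ℤ) := by push_cast; ring
    rw [hdd] at hQ hc ⊢
    have hstepcond : u ≤ (e:ℤ) * (Q - u - 1) := by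
      nlinarith [mul_nonneg he0 hd0]
    have h1 : u + 1 ≤ Q := by linarith
    have hA := stepA Q u e he hu h1 hstepcond
    have hB := ih (u+1) (by linarith) (by linarith) (by linarith)
    linarith

private lemma chainDown (Q : ℤ) (e : ℕ) (he : 2 ≤ e) :
    ∀ (d : ℕ) (u : ℤ), 1 ≤ u → (e:ℤ) * (Q - u) ≤ u + 1 →
      (Q - (u + d)) * (u + d)^e ≤ (Q - u) * u^e := by
  intro d
  induction d with
  | zero => intro u _ _; norm_num
  | succ d ih =>
    intro u hu hc
    have he0 : (0:ℤ) ≤ (e:ℤ) := by positivity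
    have h1 : (e:ℤ) * (Q - (u+1)) ≤ (u+1) + 1 := by nlinarith
    have h2 := ih (u+1) (by linarith) h1
    have h3 := stepB Q u e he hu hc
    have hdd : (u + ((d+1:ℕ):ℤ)) = (u + 1) + (d:ℤ) := by push_cast; ring
    rw [hdd]
    linarith

private lemma L4 : ∀ (k : ℕ) (P M : ℤ), 0 ≤ M → (k:ℤ) * M ≤ P →
    (P - (k:ℤ)*M) * (P + M)^k ≤ (P + (k:ℤ)*M) * (P - M)^k := by
  intro k
  induction k with
  | zero => intro P M _ _; norm_num
  | succ k ih =>
    intro P M hM h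
    have hk1 : ((k+1:ℕ):ℤ) = (k:ℤ)+1 := by push_cast; ring
    rw [hk1] at h ⊢
    rcases eq_or_lt_of_le hM with hM0 | hM0
    · rw [← hM0]; norm_num
    · have hk0 : (0:ℤ) ≤ (k:ℤ) := by positivity
      have hkM : (k:ℤ)*M ≤ P := by nlinarith
      have ihh := ih P M hM hkM
      have hPM1 : 0 ≤ P - ((k:ℤ)+1)*M := by linarith
      have hPM : 0 ≤ P - M := by nlinarith
      have hPkM' : 0 < P - (k:ℤ)*M := by nlinarith
      have hPpM : 0 ≤ P + M := by nlinarith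
      have hPpkM : 0 < P + (k:ℤ)*M := by nlinarith
      have r3 : (P - ((k:ℤ)+1)*M) * (P + (k:ℤ)*M) * (P + M)
          ≤ (P + ((k:ℤ)+1)*M) * (P - (k:ℤ)*M) * (P - M) := by
        nlinarith [mul_nonneg (mul_nonneg hk0 (by linarith : (0:ℤ) ≤ (k:ℤ)+1))
          (mul_nonneg (mul_nonneg hM hM) hM)]
      have hcnn : 0 ≤ (P - (k:ℤ)*M) * (P + M)^k :=
        mul_nonneg (le_of_lt hPkM') (pow_nonneg hPpM k)
      have hAnn : 0 ≤ (P + ((k:ℤ)+1)*M) * (P - (k:ℤ)*M) * (P - M) :=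
        mul_nonneg (mul_nonneg (by nlinarith) (le_of_lt hPkM')) hPM
      have mul1 := mul_le_mul r3 ihh hcnn hAnn
      have idl : (P - ((k:ℤ)+1)*M) * (P + (k:ℤ)*M) * (P + M) * ((P - (k:ℤ)*M) * (P + M)^k)
          = ((P + (k:ℤ)*M) * (P - (k:ℤ)*M)) * ((P - ((k:ℤ)+1)*M) * (P + M)^(k+1)) := by ring
      have idr : (P + ((k:ℤ)+1)*M) * (P - (k:ℤ)*M) * (P - M) * ((P + (k:ℤ)*M) * (P - M)^k)
          = ((P + (k:ℤ)*M) * (P - (k:ℤ)*M)) * ((P + ((k:ℤ)+1)*M) * (P - M)^(k+1)) := by ring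
      rw [idl, idr] at mul1
      exact le_of_mul_le_mul_left mul1 (mul_pos hPpkM hPkM')

private lemma Lmid (q n m : ℕ) (hq : 2 ≤ q) (hn : 3 ≤ n) (hmn : m < n) :
    ((q:ℤ) - m) * (((n:ℤ)-1)*q + m)^(n-1) ≤ ((q:ℤ) + m) * (((n:ℤ)-1)*q - m)^(n-1) := by
  have hqz : (2:ℤ) ≤ q := by exact_mod_cast hq
  have hnz3 : (3:ℤ) ≤ n := by exact_mod_cast hn
  have hmz0 : (0:ℤ) ≤ m := by positivity
  have hmnz : (m:ℤ) < n := by exact_mod_cast hmn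
  have hPm : (0:ℤ) ≤ ((n:ℤ)-1)*q - m := by nlinarith
  have hcast : ((n-1:ℕ):ℤ) = (n:ℤ)-1 := by omega
  rcases le_or_gt (m:ℤ) (q:ℤ) with hmq | hmq
  · have hcond : ((n-1:ℕ):ℤ) * m ≤ ((n:ℤ)-1)*q := by rw [hcast]; nlinarith
    have h := L4 (n-1) (((n:ℤ)-1)*q) m hmz0 hcond
    rw [hcast] at h
    have hl : (((n:ℤ)-1)*q - ((n:ℤ)-1)*m) * (((n:ℤ)-1)*q + m)^(n-1)
        = ((n:ℤ)-1) * (((q:ℤ)-m) * (((n:ℤ)-1)*q + m)^(n-1)) := by ring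
    have hr : (((n:ℤ)-1)*q + ((n:ℤ)-1)*m) * (((n:ℤ)-1)*q - m)^(n-1)
        = ((n:ℤ)-1) * (((q:ℤ)+m) * (((n:ℤ)-1)*q - m)^(n-1)) := by ring
    rw [hl, hr] at h
    exact le_of_mul_le_mul_left h (by linarith)
  · have h1 : ((q:ℤ) - m) ≤ 0 := by linarith
    have h2 : (0:ℤ) ≤ (((n:ℤ)-1)*q + m)^(n-1) := pow_nonneg (by nlinarith) _
    have h3 : (0:ℤ) ≤ ((q:ℤ)+m) := by linarith
    have h4 : (0:ℤ) ≤ (((n:ℤ)-1)*q - m)^(n-1) := pow_nonneg hPm _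
    nlinarith [mul_nonpos_of_nonpos_of_nonneg h1 h2, mul_nonneg h3 h4]

private lemma key3 (q n m F : ℕ) (hq : 2 ≤ q) (hn : 3 ≤ n) (hm1 : 1 ≤ m) (h2m : 2*m ≤ n)
    (hmn : m < n) (hF : (n:ℤ) * F = ((n:ℤ) - 1) * q - m) :
    ((q:ℤ) - ((F:ℤ) + 1)) * ((F:ℤ) + 1)^(n-1) ≤ ((q:ℤ) - F) * (F:ℤ)^(n-1) := by
  have he : 2 ≤ n - 1 := by omega
  have hnz : (0:ℤ) < n := by exact_mod_cast (show 0 < n by omega)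
  have hqz : (2:ℤ) ≤ q := by exact_mod_cast hq
  have hnz3 : (3:ℤ) ≤ n := by exact_mod_cast hn
  have hmz : (1:ℤ) ≤ m := by exact_mod_cast hm1
  have hmnz : (m:ℤ) < n := by exact_mod_cast hmn
  have h2mz : 2*(m:ℤ) ≤ n := by exact_mod_cast h2m
  have hecast : ((n-1:ℕ):ℤ) = (n:ℤ) - 1 := by omega
  have hu1 : (1:ℤ) ≤ ((n:ℤ)-1)*q + m := by nlinarith
  have hcond : ((n-1:ℕ):ℤ)*((n:ℤ)*q - (((n:ℤ)-1)*q + m)) ≤ (((n:ℤ)-1)*q + m) + 1 := by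
    rw [hecast]; nlinarith
  have hcd := chainDown ((n:ℤ)*q) (n-1) he (n - 2*m) (((n:ℤ)-1)*q + m) hu1 hcond
  have hdcast : ((n - 2*m : ℕ):ℤ) = (n:ℤ) - 2*m := by omega
  rw [hdcast] at hcd
  have hmid := Lmid q n m hq hn hmn
  have hstep1 : ((q:ℤ) + m - n) * (((n:ℤ)-1)*q + ((n:ℤ) - m))^(n-1)
      ≤ ((q:ℤ) + m) * (((n:ℤ)-1)*q - m)^(n-1) := by
    calc ((q:ℤ) + m - n) * (((n:ℤ)-1)*q + ((n:ℤ) - m))^(n-1)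
        = ((n:ℤ)*q - (((n:ℤ)-1)*q + m + ((n:ℤ) - 2*m)))
            * (((n:ℤ)-1)*q + m + ((n:ℤ)-2*m))^(n-1) := by ring_nf
      _ ≤ ((n:ℤ)*q - (((n:ℤ)-1)*q + m)) * (((n:ℤ)-1)*q + m)^(n-1) := hcd
      _ = ((q:ℤ) - m) * (((n:ℤ)-1)*q + m)^(n-1) := by ring_nf
      _ ≤ ((q:ℤ) + m) * (((n:ℤ)-1)*q - m)^(n-1) := hmid
  have e1 : (n:ℤ) * ((F:ℤ) + 1) = ((n:ℤ)-1)*q + ((n:ℤ) - m) := by linear_combination hF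
  have e2 : (n:ℤ) * ((q:ℤ) - ((F:ℤ)+1)) = (q:ℤ) + m - n := by linear_combination -hF
  have e3 : (n:ℤ) * ((q:ℤ) - F) = (q:ℤ) + m := by linear_combination -hF
  have hbig : (n:ℤ)^((n-1)+1) * (((q:ℤ) - ((F:ℤ)+1)) * ((F:ℤ)+1)^(n-1))
      ≤ (n:ℤ)^((n-1)+1) * (((q:ℤ) - F) * (F:ℤ)^(n-1)) := by
    have l1 : (n:ℤ)^((n-1)+1) * (((q:ℤ) - ((F:ℤ)+1)) * ((F:ℤ)+1)^(n-1))
        = ((n:ℤ)*((q:ℤ) - ((F:ℤ)+1))) * ((n:ℤ)*((F:ℤ)+1))^(n-1) := by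
      rw [mul_pow]; ring
    have r1 : (n:ℤ)^((n-1)+1) * (((q:ℤ) - F) * (F:ℤ)^(n-1))
        = ((n:ℤ)*((q:ℤ) - F)) * ((n:ℤ)*(F:ℤ))^(n-1) := by
      rw [mul_pow]; ring
    rw [l1, r1, e1, e2, e3, hF]
    exact hstep1
  exact le_of_mul_le_mul_left hbig (pow_pos hnz _)

private lemma upTo (q n K : ℕ) (hq : 2 ≤ q) (hn : 3 ≤ n) (hKq : K ≤ q)
    (hup : (n:ℤ)*K ≤ ((n:ℤ)-1)*q + 1) :
    ∀ l : ℕ, 1 ≤ l → l ≤ K → ((q:ℤ) - l) * (l:ℤ)^(n-1) ≤ ((q:ℤ) - K) * (K:ℤ)^(n-1) := by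
  intro l h1 h2
  have he : 2 ≤ n - 1 := by omega
  have hcast : ((n-1:ℕ):ℤ) = (n:ℤ)-1 := by omega
  have hKl : ((l:ℤ) + ((K - l : ℕ):ℤ)) = (K:ℤ) := by omega
  have hqn : ((n:ℤ)-1)*(q:ℤ) = (n:ℤ)*q - q := by ring
  have h := chainUp (q:ℤ) (n-1) he (K - l) (l:ℤ) (by exact_mod_cast h1)
    (by rw [hKl]; exact_mod_cast hKq)
    (by rw [hKl, hcast]; nlinarith [hup])
  rw [hKl] at h
  exact h

private lemma downFrom (q n K : ℕ) (hq : 2 ≤ q) (hn : 3 ≤ n) (hK1 : 1 ≤ K)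
    (hlow : ((n:ℤ)-1)*q ≤ (n:ℤ)*K + 1) :
    ∀ l : ℕ, K ≤ l → ((q:ℤ) - l) * (l:ℤ)^(n-1) ≤ ((q:ℤ) - K) * (K:ℤ)^(n-1) := by
  intro l hKl
  have he : 2 ≤ n - 1 := by omega
  have hcast : ((n-1:ℕ):ℤ) = (n:ℤ)-1 := by omega
  have hKl' : ((K:ℤ) + ((l - K : ℕ):ℤ)) = (l:ℤ) := by omega
  have hc : ((n-1:ℕ):ℤ) * ((q:ℤ) - K) ≤ (K:ℤ) + 1 := by rw [hcast]; nlinarith [hlow]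
  have h := chainDown (q:ℤ) (n-1) he (l - K) (K:ℤ) (by exact_mod_cast hK1) hc
  rw [hKl'] at h
  exact h

private lemma predmul (n q : ℕ) (h : 1 ≤ n) : (n-1)*q + q = n*q := by
  obtain ⟨k, rfl⟩ := Nat.exists_eq_add_of_le h
  rw [Nat.add_sub_cancel_left]
  ring

private lemma ceil_eq (n q F m : ℕ) (hn : 3 ≤ n) (hdm : n * F + m = (n-1) * q)
    (hm2 : m = n - 1) :
    n * (((n-1)*q + n - 1) / n) = (n-1)*q + 1 := by
  have h1 : (n-1)*q + n - 1 = n*(F+1) + (n-2) := by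
    rw [← hdm, hm2, show n*(F+1) = n*F + n from by ring]
    generalize n * F = a
    omega
  rw [h1, Nat.mul_add_div (by omega : 0 < n), Nat.div_eq_of_lt (by omega : n - 2 < n)]
  rw [← hdm, hm2, show n*(F+1+0) = n*F + n from by ring]
  generalize n * F = a
  omega

set_option maxHeartbeats 2000000 in
/-- Where the function `f(l) = (q - l)·l^(n-1)` attains its maximum on `{1,…,q-1}`,
depending on the residue `m` of `(n-1)q` modulo `n`. -/
theorem stmt15 (q n : ℕ) (hq : 2 ≤ q) (hn : 3 ≤ n) (m : ℕ)
    (hm : m = ((n - 1) * q) % n) :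
    (n ∣ q → ∀ l ∈ Finset.Icc 1 (q - 1),
      (q - l) * l ^ (n - 1) ≤
        (q - (n - 1) * q / n) * ((n - 1) * q / n) ^ (n - 1)) ∧
    (m = n - 1 → ∀ l ∈ Finset.Icc 1 (q - 1),
      (q - l) * l ^ (n - 1) ≤
        (q - ((n - 1) * q + n - 1) / n) * (((n - 1) * q + n - 1) / n) ^ (n - 1)) ∧
    (1 ≤ m → 2 * m ≤ n → ∀ l ∈ Finset.Icc 1 (q - 1),
      (q - l) * l ^ (n - 1) ≤
        (q - (n - 1) * q / n) * ((n - 1) * q / n) ^ (n - 1)) := by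
  have hn0 : 0 < n := by omega
  have hdm : n * ((n-1)*q / n) + m = (n-1)*q := by
    rw [hm]; exact Nat.div_add_mod _ _
  have hp : (n-1)*q + q = n*q := predmul n q (by omega)
  refine ⟨?_, ?_, ?_⟩
  · -- case n ∣ q
    intro hd l hl
    rw [Finset.mem_Icc] at hl
    obtain ⟨hl1, hl2⟩ := hl
    have hlq : l ≤ q := by omega
    set K := (n-1)*q/n with hKdef
    have hKn : n * K = (n-1)*q := by
      rw [hKdef]; exact Nat.mul_div_cancel' (hd.mul_left (n-1))
    have hKn2 : n*K + q = n*q := by omega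
    have hKq : K ≤ q := by
      apply Nat.le_of_mul_le_mul_left _ hn0
      omega
    have hK1 : 1 ≤ K := by
      rcases Nat.eq_zero_or_pos K with h|h
      · exfalso
        rw [h, Nat.mul_zero] at hKn
        have := Nat.mul_pos (show 0 < n-1 by omega) (show 0 < q by omega)
        omega
      · exact h
    have hKZ : (n:ℤ)*(K:ℤ) + (q:ℤ) = (n:ℤ)*(q:ℤ) := by exact_mod_cast hKn2
    zify [hlq, hKq]
    rcases le_or_gt l K with h|h
    · exact upTo q n K hq hn hKq (by nlinarith [hKZ]) l hl1 h
    · exact downFrom q n K hq hn hK1 (by nlinarith [hKZ]) l h.le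
  · -- case m = n - 1
    intro hm2 l hl
    rw [Finset.mem_Icc] at hl
    obtain ⟨hl1, hl2⟩ := hl
    have hlq : l ≤ q := by omega
    set K := ((n-1)*q + n - 1)/n with hKdef
    have hKn : n * K = (n-1)*q + 1 := by
      rw [hKdef]; exact ceil_eq n q ((n-1)*q/n) m hn hdm hm2
    have hKn2 : n*K + q = n*q + 1 := by omega
    have hKq : K ≤ q := by
      apply Nat.le_of_mul_le_mul_left _ hn0
      omega
    have hK1 : 1 ≤ K := by
      rcases Nat.eq_zero_or_pos K with h|h
      · exfalso
        rw [h, Nat.mul_zero] at hKn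
        omega
      · exact h
    have hKZ : (n:ℤ)*(K:ℤ) + (q:ℤ) = (n:ℤ)*(q:ℤ) + 1 := by exact_mod_cast hKn2
    zify [hlq, hKq]
    rcases le_or_gt l K with h|h
    · exact upTo q n K hq hn hKq (by nlinarith [hKZ]) l hl1 h
    · exact downFrom q n K hq hn hK1 (by nlinarith [hKZ]) l h.le
  · -- case 1 ≤ m, 2m ≤ n
    intro hm1 h2m l hl
    rw [Finset.mem_Icc] at hl
    obtain ⟨hl1, hl2⟩ := hl
    have hlq : l ≤ q := by omega
    have hmn : m < n := by rw [hm]; exact Nat.mod_lt _ hn0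
    set F := (n-1)*q/n with hFdef
    have hdm2 : n*F + m + q = n*q := by omega
    have hFZ2 : (n:ℤ)*(F:ℤ) + (m:ℤ) + (q:ℤ) = (n:ℤ)*(q:ℤ) := by exact_mod_cast hdm2
    have hFZ : (n:ℤ) * (F:ℤ) = ((n:ℤ)-1)*(q:ℤ) - (m:ℤ) := by linarith [hFZ2]
    have hKq : F ≤ q := by
      apply Nat.le_of_mul_le_mul_left _ hn0
      omega
    have hmz0 : (0:ℤ) ≤ (m:ℤ) := by positivity
    have hmnz : (m:ℤ) < (n:ℤ) := by exact_mod_cast hmn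
    zify [hlq, hKq]
    rcases le_or_gt l F with h|h
    · exact upTo q n F hq hn hKq (by nlinarith [hFZ]) l hl1 h
    · have h1 := downFrom q n (F + 1) hq hn (Nat.le_add_left 1 F)
        (by push_cast; linarith [hFZ2, hmnz]) l h
      have h2 := key3 q n m F hq hn hm1 h2m hmn hFZ
      have hc : ((F + 1 : ℕ):ℤ) = (F:ℤ) + 1 := by push_cast; ring
      rw [hc] at h1
      exact le_trans h1 h2
end
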